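/- arXiv:1811.12447 — 7 statements merged into one kernel-verified Lean document; each statement's English description precedes it below -/
import Mathlib

section
/- There exists m₀ ∈ ℕ such that for all m ≥ m₀ and all natural numbers r, ℓ with 20 ≤ r ≤ m and ℓ an integer with 1 ≤ ℓ < r/3, the number of f ∈ P(m,r) with bias(f) ≥ 2^{-ℓ} is at least (1/2)·2^{Σ_{j=1}^{ℓ-1} binom(m-j, ≤ r-1)}. -/
open Finset

abbrev Cube (m : ℕ) := Fin m → ZMod 2
abbrev BF (m : ℕ) := Cube m → ZMod 2

/-- Codewords of RM(m,r): functions computed by a polynomial of total degree ≤ r. -/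
def RM (m r : ℕ) : Set (BF m) :=
  {f | ∃ p : MvPolynomial (Fin m) (ZMod 2), p.totalDegree ≤ r ∧
    ∀ x, MvPolynomial.eval x p = f x}

/-- Normalized weight of a Boolean function. -/
noncomputable def wt {m : ℕ} (f : BF m) : ℝ :=
  ((univ.filter fun x => f x = 1).card : ℝ) / 2 ^ m

/-- Bias of a Boolean function. -/
noncomputable def bias {m : ℕ} (f : BF m) : ℝ :=
  (∑ x : Cube m, if f x = 0 then (1 : ℝ) else -1) / 2 ^ m

/-- Number of codewords of RM(m,r) of weight at most β. -/
noncomputable def W (m r : ℕ) (β : ℝ) : ℕ :=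
  Set.ncard {f : BF m | f ∈ RM m r ∧ wt f ≤ β}

/-- binom(n, ≤ k) = ∑_{i=0}^k C(n,i). -/
def binomLe (n k : ℕ) : ℕ := ∑ i ∈ Finset.range (k + 1), n.choose i

namespace LBB

/-- sign of an F2 element -/
def sgn (v : ZMod 2) : ℝ := if v = 0 then 1 else -1

lemma sgn_zero : sgn 0 = 1 := rfl

lemma sgn_add (a b : ZMod 2) : sgn (a + b) = sgn a * sgn b := by
  have h : ∀ v : ZMod 2, v = 0 ∨ v = 1 := by decide
  have h2 : (2 : ZMod 2) = 0 := by decide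
  rcases h a with ha | ha <;> rcases h b with hb | hb <;>
    subst ha <;> subst hb <;> norm_num [sgn, h2] <;> try exact h2

lemma sgn_sum {ι : Type*} (s : Finset ι) (g : ι → ZMod 2) :
    sgn (∑ i ∈ s, g i) = ∏ i ∈ s, sgn (g i) := by
  classical
  induction s using Finset.induction_on with
  | empty => simp [sgn_zero]
  | insert hx ih => simp_all [sgn_add]

lemma sgn_le_one (v : ZMod 2) : sgn v ≤ 1 := by
  unfold sgn; split <;> norm_num

/-- character sum over F2^ι -/
lemma charSum {ι : Type*} [Fintype ι] [DecidableEq ι] (a : ι → ZMod 2) :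
    ∑ c : ι → ZMod 2, sgn (∑ i, c i * a i) =
      if ∀ i, a i = 0 then (2 : ℝ) ^ Fintype.card ι else 0 := by
  have key : ∀ c : ι → ZMod 2, sgn (∑ i, c i * a i) = ∏ i, sgn (c i * a i) :=
    fun c => sgn_sum _ _
  simp_rw [key]
  rw [← Fintype.prod_sum (fun i (v : ZMod 2) => sgn (v * a i))]
  have hfac : ∀ i, (∑ v : ZMod 2, sgn (v * a i)) = if a i = 0 then 2 else 0 := by
    intro i
    have h : ∀ v : ZMod 2, v = 0 ∨ v = 1 := by decide
    rcases h (a i) with ha | ha <;> rw [ha] <;>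
      · rw [show (univ : Finset (ZMod 2)) = {0, 1} by decide]
        norm_num [sgn]
  simp_rw [hfac]
  by_cases h : ∀ i, a i = 0
  · simp [h, prod_const, Finset.card_univ]
  · push_neg at h
    obtain ⟨i, hi⟩ := h
    rw [if_neg (by push_neg; exact ⟨i, hi⟩)]
    exact Finset.prod_eq_zero (mem_univ i) (by simp [hi])

end LBB

namespace LBB2
open LBB

variable (m r k : ℕ)

/-- admissible monomial supports -/
def Mset : Finset (Finset (Fin m)) :=
  univ.filter fun S => (∃ i ∈ S, (i : ℕ) < k) ∧ S.card ≤ r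

abbrev Idx := {S : Finset (Fin m) // S ∈ Mset m r k}

def eS {m : ℕ} (S : Finset (Fin m)) (x : Cube m) : ZMod 2 := ∏ i ∈ S, x i

def fC {m r k : ℕ} (c : Idx m r k → ZMod 2) : BF m :=
  fun x => ∑ S : Idx m r k, c S * eS S.1 x

lemma mem_Mset {S : Finset (Fin m)} :
    S ∈ Mset m r k ↔ (∃ i ∈ S, (i : ℕ) < k) ∧ S.card ≤ r := by
  simp [Mset]

lemma fC_mem_RM (c : Idx m r k → ZMod 2) : fC c ∈ RM m r := by
  classical
  refine ⟨∑ S : Idx m r k, MvPolynomial.C (c S) * ∏ i ∈ S.1, MvPolynomial.X i, ?_, ?_⟩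
  · refine le_trans (MvPolynomial.totalDegree_finset_sum _ _) ?_
    apply Finset.sup_le
    intro S _
    refine le_trans (MvPolynomial.totalDegree_mul _ _) ?_
    rw [MvPolynomial.totalDegree_C, zero_add]
    refine le_trans (MvPolynomial.totalDegree_finset_prod _ _) ?_
    refine le_trans (Finset.sum_le_card_nsmul _ _ 1 ?_) ?_
    · intro i _; exact le_of_eq (MvPolynomial.totalDegree_X i)
    · simp only [smul_eq_mul, mul_one]
      exact ((mem_Mset m r k).1 S.2).2
  · intro x
    rw [map_sum]
    refine Finset.sum_congr rfl fun S _ => ?_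
    rw [map_mul, MvPolynomial.eval_C, MvPolynomial.eval_prod]
    simp [eS]

lemma eS_indicator {m : ℕ} (T S : Finset (Fin m)) :
    eS T (fun i => if i ∈ S then 1 else 0) = if T ⊆ S then 1 else 0 := by
  classical
  by_cases h : T ⊆ S
  · rw [if_pos h]
    exact Finset.prod_eq_one fun i hi => by simp [h hi]
  · rw [if_neg h]
    obtain ⟨i, hi, his⟩ := Finset.not_subset.1 h
    exact Finset.prod_eq_zero hi (by simp [his])

lemma zero_of_fC_zero (d : Idx m r k → ZMod 2) (h : ∀ x, fC d x = 0) : d = 0 := by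
  classical
  funext S
  suffices H : ∀ n (S : Idx m r k), S.1.card ≤ n → d S = 0 from H S.1.card S le_rfl
  intro n
  induction n with
  | zero =>
    intro S hS
    obtain ⟨i, hi, _⟩ := ((mem_Mset m r k).1 S.2).1
    rw [Nat.le_zero, Finset.card_eq_zero] at hS
    simp [hS] at hi
  | succ n ih =>
    intro S hS
    have hx := h (fun i => if i ∈ S.1 then 1 else 0)
    rw [fC] at hx
    simp_rw [eS_indicator, mul_ite, mul_one, mul_zero] at hx
    rw [Finset.sum_ite, Finset.sum_const, smul_zero, add_zero] at hx
    rw [Finset.sum_eq_single S] at hx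
    · exact hx
    · intro T _ hTS
      rcases Finset.mem_filter.1 ‹T ∈ univ.filter fun T : Idx m r k => T.1 ⊆ S.1› with ⟨_, hsub⟩
      have hne : T.1 ≠ S.1 := fun e => hTS (Subtype.ext e)
      have : T.1.card < S.1.card := Finset.card_lt_card (lt_of_le_of_ne hsub hne)
      exact ih T (by omega)
    · intro hSn
      exact absurd (Finset.mem_filter.2 ⟨mem_univ S, (subset_rfl : S.1 ⊆ S.1)⟩) hSn

lemma fC_injective : Function.Injective (fC (m := m) (r := r) (k := k)) := by
  intro c c' hcc
  have hadd : ∀ x, fC (c + c') x = 0 := by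
    intro x
    have : fC (c + c') x = fC c x + fC c' x := by
      simp [fC, add_mul, Finset.sum_add_distrib]
    rw [this, hcc]
    exact CharTwo.add_self_eq_zero _
  have := zero_of_fC_zero m r k (c + c') hadd
  funext S
  have hS := congrFun this S
  simp only [Pi.add_apply, Pi.zero_apply] at hS
  have h2 : ∀ a b : ZMod 2, a + b = 0 → a = b := by decide
  exact h2 _ _ hS

end LBB2

namespace LBB2
open LBB

variable (m r k : ℕ)

/-- the zero-prefix set -/
def Zset : Finset (Cube m) :=
  univ.filter fun x => ∀ j : Fin m, (j : ℕ) < k → x j = 0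

lemma singleton_mem_Mset (hr : 1 ≤ r) {j : Fin m} (hj : (j : ℕ) < k) :
    ({j} : Finset (Fin m)) ∈ Mset m r k :=
  (mem_Mset m r k).2 ⟨⟨j, Finset.mem_singleton_self j, hj⟩, by simpa using hr⟩

lemma cond1 (hr : 1 ≤ r) (x : Cube m) :
    (∀ S : Idx m r k, eS S.1 x = 0) ↔ (x ∈ Zset m k) := by
  constructor
  · intro h
    simp only [Zset, mem_filter, mem_univ, true_and]
    intro j hj
    have := h ⟨{j}, singleton_mem_Mset m r k hr hj⟩
    simpa [eS] using this
  · intro hx S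
    simp only [Zset, mem_filter, mem_univ, true_and] at hx
    obtain ⟨i, hi, hik⟩ := ((mem_Mset m r k).1 S.2).1
    exact Finset.prod_eq_zero hi (hx i hik)

lemma moment1 (hr : 1 ≤ r) :
    ∑ c : Idx m r k → ZMod 2, ∑ x : Cube m, sgn (fC c x) =
      (2 : ℝ) ^ Fintype.card (Idx m r k) * (Zset m k).card := by
  classical
  rw [Finset.sum_comm]
  have hinner : ∀ x : Cube m,
      (∑ c : Idx m r k → ZMod 2, sgn (fC c x)) =
        if x ∈ Zset m k then (2 : ℝ) ^ Fintype.card (Idx m r k) else 0 := by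
    intro x
    simp only [fC]
    rw [charSum (fun S : Idx m r k => eS S.1 x)]
    by_cases h : x ∈ Zset m k
    · rw [if_pos h, if_pos ((cond1 m r k hr x).2 h)]
    · rw [if_neg h, if_neg (fun hh => h ((cond1 m r k hr x).1 hh))]
  simp_rw [hinner]
  rw [Finset.sum_ite_mem, Finset.univ_inter, Finset.sum_const, nsmul_eq_mul, mul_comm]

end LBB2

namespace LBB2
open LBB

variable (m r k : ℕ)

lemma pair_mem_Mset (hr : 2 ≤ r) {j i : Fin m} (hj : (j : ℕ) < k) :
    ({j, i} : Finset (Fin m)) ∈ Mset m r k := by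
  refine (mem_Mset m r k).2 ⟨⟨j, by simp, hj⟩, ?_⟩
  exact le_trans (Finset.card_insert_le _ _) (by simpa using hr)

lemma one_of_ne_zero {v : ZMod 2} (h : v ≠ 0) : v = 1 := by
  revert h; revert v; decide

lemma cond2 (hr : 2 ≤ r) (x y : Cube m)
    (h : ∀ S : Idx m r k, eS S.1 x + eS S.1 y = 0) :
    x = y ∨ (x ∈ Zset m k ∧ y ∈ Zset m k) := by
  classical
  have h2 : ∀ a b : ZMod 2, a + b = 0 → a = b := by decide
  have hsing : ∀ j : Fin m, (j : ℕ) < k → x j = y j := by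
    intro j hj
    have := h2 _ _ (h ⟨{j}, singleton_mem_Mset m r k (by omega) hj⟩)
    simpa [eS] using this
  by_cases hz : ∀ j : Fin m, (j : ℕ) < k → x j = 0
  · refine Or.inr ⟨?_, ?_⟩ <;> simp only [Zset, mem_filter, mem_univ, true_and]
    · exact hz
    · intro j hj; rw [← hsing j hj]; exact hz j hj
  · push_neg at hz
    obtain ⟨j, hj, hxj⟩ := hz
    have hxj1 : x j = 1 := one_of_ne_zero hxj
    have hyj1 : y j = 1 := by rw [← hsing j hj]; exact hxj1
    refine Or.inl (funext fun i => ?_)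
    by_cases hij : i = j
    · subst hij; exact hsing i hj
    · have := h2 _ _ (h ⟨{j, i}, pair_mem_Mset m r k hr hj⟩)
      rw [eS, eS, Finset.prod_pair (Ne.symm hij), Finset.prod_pair (Ne.symm hij),
        hxj1, hyj1, one_mul, one_mul] at this
      exact this

lemma moment2 (hr : 2 ≤ r) :
    ∑ c : Idx m r k → ZMod 2, (∑ x : Cube m, sgn (fC c x)) ^ 2 ≤
      (2 : ℝ) ^ Fintype.card (Idx m r k) * (2 ^ m + ((Zset m k).card : ℝ) ^ 2) := by
  classical
  have step1 : ∀ c : Idx m r k → ZMod 2,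
      (∑ x : Cube m, sgn (fC c x)) ^ 2 =
        ∑ x : Cube m, ∑ y : Cube m, sgn (∑ S : Idx m r k, c S * (eS S.1 x + eS S.1 y)) := by
    intro c
    rw [sq, Finset.sum_mul_sum]
    refine Finset.sum_congr rfl fun x _ => Finset.sum_congr rfl fun y _ => ?_
    rw [← sgn_add]
    congr 1
    simp [fC, mul_add, Finset.sum_add_distrib]
  simp_rw [step1]
  rw [Finset.sum_comm]
  have hswap : ∀ x : Cube m, ∑ c : Idx m r k → ZMod 2,
      (∑ y : Cube m, sgn (∑ S : Idx m r k, c S * (eS S.1 x + eS S.1 y))) =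
      ∑ y : Cube m, ∑ c : Idx m r k → ZMod 2,
        sgn (∑ S : Idx m r k, c S * (eS S.1 x + eS S.1 y)) := fun x => Finset.sum_comm
  simp_rw [hswap]
  have hchar : ∀ x y : Cube m,
      (∑ c : Idx m r k → ZMod 2, sgn (∑ S : Idx m r k, c S * (eS S.1 x + eS S.1 y))) =
        if ∀ S : Idx m r k, eS S.1 x + eS S.1 y = 0
          then (2 : ℝ) ^ Fintype.card (Idx m r k) else 0 :=
    fun x y => charSum _
  simp_rw [hchar]
  set T : ℝ := (2 : ℝ) ^ Fintype.card (Idx m r k) with hT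
  have hT0 : 0 ≤ T := by positivity
  have hle : ∀ x y : Cube m,
      (if ∀ S : Idx m r k, eS S.1 x + eS S.1 y = 0 then T else 0) ≤
        (if x = y then T else 0) + (if x ∈ Zset m k ∧ y ∈ Zset m k then T else 0) := by
    intro x y
    by_cases h : ∀ S : Idx m r k, eS S.1 x + eS S.1 y = 0
    · rw [if_pos h]
      rcases cond2 m r k hr x y h with h1 | h1
      · rw [if_pos h1]
        have : (0:ℝ) ≤ if x ∈ Zset m k ∧ y ∈ Zset m k then T else 0 := by positivity
        linarith
      · rw [if_pos h1]
        have : (0:ℝ) ≤ if x = y then T else 0 := by positivity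
        linarith
    · rw [if_neg h]
      have h1 : (0:ℝ) ≤ if x = y then T else 0 := by positivity
      have h2 : (0:ℝ) ≤ if x ∈ Zset m k ∧ y ∈ Zset m k then T else 0 := by positivity
      linarith
  calc ∑ x : Cube m, ∑ y : Cube m,
        (if ∀ S : Idx m r k, eS S.1 x + eS S.1 y = 0 then T else 0)
      ≤ ∑ x : Cube m, ∑ y : Cube m,
        ((if x = y then T else 0) + (if x ∈ Zset m k ∧ y ∈ Zset m k then T else 0)) := by
        refine Finset.sum_le_sum fun x _ => Finset.sum_le_sum fun y _ => hle x y
    _ = (∑ x : Cube m, ∑ y : Cube m, (if x = y then T else 0)) +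
        (∑ x : Cube m, ∑ y : Cube m, (if x ∈ Zset m k ∧ y ∈ Zset m k then T else 0)) := by
        rw [← Finset.sum_add_distrib]
        exact Finset.sum_congr rfl fun x _ => Finset.sum_add_distrib
    _ = T * 2 ^ m + ((Zset m k).card : ℝ) ^ 2 * T := by
        congr 1
        · have : ∀ x : Cube m, (∑ y : Cube m, if x = y then T else 0) = T := by
            intro x; rw [Finset.sum_ite_eq]; simp
          simp_rw [this]
          rw [Finset.sum_const, nsmul_eq_mul]
          simp [Fintype.card_fun, mul_comm]
        · have : ∀ x : Cube m, (∑ y : Cube m, if x ∈ Zset m k ∧ y ∈ Zset m k then T else 0) =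
              (if x ∈ Zset m k then ((Zset m k).card : ℝ) * T else 0) := by
            intro x
            by_cases hx : x ∈ Zset m k
            · simp only [hx, true_and, if_pos]
              rw [Finset.sum_ite_mem, Finset.univ_inter, Finset.sum_const, nsmul_eq_mul]
            · simp [hx]
          simp_rw [this]
          rw [Finset.sum_ite_mem, Finset.univ_inter, Finset.sum_const, nsmul_eq_mul]
          ring
    _ ≤ T * (2 ^ m + ((Zset m k).card : ℝ) ^ 2) := by ring_nf; linarith [hT0]
end LBB2

namespace LBB2
open LBB

variable (m r k : ℕ)

lemma card_vanishing (F : Finset (Fin m)) :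
    (univ.filter fun x : Cube m => ∀ j ∈ F, x j = 0).card = 2 ^ (m - F.card) := by
  classical
  rw [← Fintype.card_subtype]
  have e : {x : Cube m // ∀ j ∈ F, x j = 0} ≃ (↥(Fᶜ : Finset (Fin m)) → ZMod 2) :=
    { toFun := fun x j => x.1 j.1
      invFun := fun y => ⟨fun j => if h : j ∈ (Fᶜ : Finset (Fin m)) then y ⟨j, h⟩ else 0,
        fun j hj => dif_neg (by simpa using hj)⟩
      left_inv := by
        intro x; ext j
        by_cases h : j ∈ (Fᶜ : Finset (Fin m))
        · simp [h]
        · simp only [dif_neg h]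
          exact (x.2 j (by simpa using h)).symm
      right_inv := by intro y; ext j; simp [j.2] }
  rw [Fintype.card_congr e, Fintype.card_fun]
  simp [Finset.card_compl, ZMod.card]

lemma card_lt_filter (hkm : k ≤ m) :
    (univ.filter fun j : Fin m => (j : ℕ) < k).card = k := by
  classical
  rw [← Fintype.card_subtype]
  refine (Fintype.card_congr ⟨fun j => (⟨j.1.1, j.2⟩ : Fin k),
    fun i => ⟨⟨i.1, lt_of_lt_of_le i.2 hkm⟩, i.2⟩, fun j => Subtype.ext (Fin.ext rfl),
    fun i => Fin.ext rfl⟩).trans (Fintype.card_fin k)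

lemma card_Zset (hkm : k ≤ m) : (Zset m k).card = 2 ^ (m - k) := by
  classical
  have hZ : Zset m k =
      univ.filter fun x : Cube m => ∀ j ∈ (univ.filter fun j : Fin m => (j : ℕ) < k), x j = 0 := by
    apply Finset.filter_congr
    intro x _
    simp
  rw [hZ, card_vanishing, card_lt_filter m k hkm]

lemma card_powerset_filter {α : Type*} [DecidableEq α] (s : Finset α) (d : ℕ) :
    ((s.powerset.filter fun A => A.card ≤ d)).card = binomLe s.card d := by
  have heq : s.powerset.filter (fun A => A.card ≤ d) =
      (Finset.range (d + 1)).biUnion fun i => Finset.powersetCard i s := by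
    ext A
    simp only [mem_filter, Finset.mem_powerset, Finset.mem_biUnion, Finset.mem_range,
      Finset.mem_powersetCard, Nat.lt_succ_iff]
    constructor
    · rintro ⟨h1, h2⟩; exact ⟨A.card, h2, h1, rfl⟩
    · rintro ⟨i, hi, h1, rfl⟩; exact ⟨h1, hi⟩
  rw [heq, Finset.card_biUnion]
  · unfold binomLe
    exact Finset.sum_congr rfl fun i _ => Finset.card_powersetCard i s
  · intro i _ j _ hij
    simp only [Finset.disjoint_left, Finset.mem_powersetCard]
    rintro A ⟨_, rfl⟩ ⟨_, h⟩
    exact hij h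

lemma Mset_card_ge (hr : 1 ≤ r) (hkm : k ≤ m) :
    ∑ j ∈ Finset.range k, binomLe (m - (j + 1)) (r - 1) ≤ (Mset m r k).card := by
  classical
  set N : ℕ → Finset (Finset (Fin m)) := fun j =>
    if h : j < m then
      (((Finset.Ioi (⟨j, h⟩ : Fin m)).powerset.filter fun A => A.card ≤ r - 1)).image
        (insert (⟨j, h⟩ : Fin m))
    else ∅ with hN
  have hmemN : ∀ j, ∀ hj : j < k, ∀ S ∈ N j, (⟨j, lt_of_lt_of_le hj hkm⟩ : Fin m) ∈ S ∧
      ∀ i ∈ S, (⟨j, lt_of_lt_of_le hj hkm⟩ : Fin m) ≤ i := by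
    intro j hj S hS
    have hjm : j < m := lt_of_lt_of_le hj hkm
    rw [hN] at hS
    simp only [dif_pos hjm, Finset.mem_image, mem_filter, Finset.mem_powerset] at hS
    obtain ⟨A, ⟨hA1, _⟩, rfl⟩ := hS
    refine ⟨Finset.mem_insert_self _ _, ?_⟩
    intro i hi
    rcases Finset.mem_insert.1 hi with rfl | hiA
    · exact le_rfl
    · exact le_of_lt (Finset.mem_Ioi.1 (hA1 hiA))
  have hsub : ∀ j, j < k → N j ⊆ Mset m r k := by
    intro j hj S hS
    have hjm : j < m := lt_of_lt_of_le hj hkm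
    rw [hN] at hS
    simp only [dif_pos hjm, Finset.mem_image, mem_filter, Finset.mem_powerset] at hS
    obtain ⟨A, ⟨hA1, hA2⟩, rfl⟩ := hS
    refine (mem_Mset m r k).2 ⟨⟨⟨j, hjm⟩, Finset.mem_insert_self _ _, hj⟩, ?_⟩
    calc (insert (⟨j, hjm⟩ : Fin m) A).card ≤ A.card + 1 := Finset.card_insert_le _ _
      _ ≤ r := by omega
  have hdisj : ∀ j ∈ Finset.range k, ∀ j' ∈ Finset.range k, j ≠ j' →
      Disjoint (N j) (N j') := by
    intro j hj j' hj' hne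
    rw [Finset.mem_range] at hj hj'
    rw [Finset.disjoint_left]
    intro S hS hS'
    obtain ⟨h1, h2⟩ := hmemN j hj S hS
    obtain ⟨h1', h2'⟩ := hmemN j' hj' S hS'
    have heq : (⟨j, lt_of_lt_of_le hj hkm⟩ : Fin m) = ⟨j', lt_of_lt_of_le hj' hkm⟩ :=
      le_antisymm (h2 _ h1') (h2' _ h1)
    exact hne (by simpa using congrArg Fin.val heq)
  have hcardN : ∀ j, j < k → (N j).card = binomLe (m - (j + 1)) (r - 1) := by
    intro j hj
    have hjm : j < m := lt_of_lt_of_le hj hkm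
    rw [hN]
    simp only [dif_pos hjm]
    rw [Finset.card_image_of_injOn, card_powerset_filter, Fin.card_Ioi]
    · congr 1
      simp only [Fin.val_mk]
      omega
    · intro A hA B hB hAB
      simp only [coe_filter, Finset.mem_powerset, Set.mem_setOf_eq] at hA hB
      have hjA : (⟨j, hjm⟩ : Fin m) ∉ A := fun h => absurd (Finset.mem_Ioi.1 (hA.1 h)) (by simp)
      have hjB : (⟨j, hjm⟩ : Fin m) ∉ B := fun h => absurd (Finset.mem_Ioi.1 (hB.1 h)) (by simp)
      rw [← Finset.erase_insert hjA, ← Finset.erase_insert hjB, hAB]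
  calc ∑ j ∈ Finset.range k, binomLe (m - (j + 1)) (r - 1)
      = ∑ j ∈ Finset.range k, (N j).card := by
        refine Finset.sum_congr rfl fun j hj => ?_
        exact (hcardN j (Finset.mem_range.1 hj)).symm
    _ = ((Finset.range k).biUnion N).card := (Finset.card_biUnion hdisj).symm
    _ ≤ (Mset m r k).card := by
        apply Finset.card_le_card
        intro S hS
        obtain ⟨j, hj, hSj⟩ := Finset.mem_biUnion.1 hS
        exact hsub j (Finset.mem_range.1 hj) hSj

end LBB2


/-- lower bound on the number of codewords of RM(m,r) of bias at
least 2^{-ℓ} (Theorem `main thm: lower bound for bias`). -/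
theorem lower_bound_bias :
    ∃ m₀ : ℕ, ∀ m : ℕ, m₀ ≤ m → ∀ r ℓ : ℕ, 20 ≤ r → r ≤ m → 1 ≤ ℓ → 3 * ℓ < r →
      (1 / 2 : ℝ) * 2 ^ (∑ j ∈ Finset.Icc 1 (ℓ - 1), binomLe (m - j) (r - 1)) ≤
        (Set.ncard {f : BF m | f ∈ RM m r ∧ (2 : ℝ) ^ (-(ℓ : ℤ)) ≤ bias f} : ℝ) := by
  classical
  refine ⟨20, fun m hm r ℓ hr20 hrm hl1 hl3 => ?_⟩
  set k := ℓ - 1 with hk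
  have hkm : k ≤ m := by omega
  have hr1 : (1:ℕ) ≤ r := by omega
  have hr2 : (2:ℕ) ≤ r := by omega
  set X : (LBB2.Idx m r k → ZMod 2) → ℝ :=
    fun c => ∑ x : Cube m, LBB.sgn (LBB2.fC c x) with hX
  set N := Fintype.card (LBB2.Idx m r k) with hN
  set t : ℝ := 2 ^ N with ht
  have htpos : (0:ℝ) < t := by positivity
  have hcard_dom : (Fintype.card (LBB2.Idx m r k → ZMod 2)) = 2 ^ N := by
    rw [Fintype.card_fun, ZMod.card]
  have hZc : ((LBB2.Zset m k).card : ℝ) = 2 ^ (m - k) := by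
    rw [LBB2.card_Zset m k hkm]; push_cast; ring
  set μ : ℝ := 2 ^ (m - k) with hμ
  have h1 : ∑ c : LBB2.Idx m r k → ZMod 2, X c = t * μ := by
    have := LBB2.moment1 m r k hr1
    rw [hZc] at this
    exact this
  have h2 : ∑ c : LBB2.Idx m r k → ZMod 2, (X c) ^ 2 ≤ t * (2 ^ m + μ ^ 2) := by
    have := LBB2.moment2 m r k hr2
    rw [hZc] at this
    exact this
  have hsq : ∑ c : LBB2.Idx m r k → ZMod 2, (X c - μ) ^ 2 ≤ t * 2 ^ m := by
    have hexp : ∀ c : LBB2.Idx m r k → ZMod 2, (X c - μ) ^ 2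
        = X c ^ 2 - 2 * μ * X c + μ ^ 2 := fun c => by ring
    simp_rw [hexp]
    rw [Finset.sum_add_distrib, Finset.sum_sub_distrib, ← Finset.mul_sum, h1,
      Finset.sum_const, Finset.card_univ, hcard_dom, nsmul_eq_mul]
    have hcast : ((2 ^ N : ℕ) : ℝ) = t := by rw [ht]; push_cast; ring
    rw [hcast]
    nlinarith [h2]
  set B := univ.filter
    fun c : LBB2.Idx m r k → ZMod 2 => ¬ ((2:ℝ) ^ (-(ℓ:ℤ)) ≤ bias (LBB2.fC c)) with hB
  set G := univ.filter
    fun c : LBB2.Idx m r k → ZMod 2 => ((2:ℝ) ^ (-(ℓ:ℤ)) ≤ bias (LBB2.fC c)) with hG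
  clear_value B G
  set a : ℝ := 2 ^ (m - ℓ) with ha
  have ha0 : (0:ℝ) < a := by positivity
  have hmk : m - k = (m - ℓ) + 1 := by omega
  have hμa : μ = 2 * a := by rw [hμ, hmk, pow_succ]; ring
  have h2m : (2:ℝ) ^ m = a * 2 ^ ℓ := by rw [ha, ← pow_add]; congr 1; omega
  have hXbias : ∀ c : LBB2.Idx m r k → ZMod 2, bias (LBB2.fC c) = X c / 2 ^ m :=
    fun c => rfl
  have hbad : ∀ c ∈ B, a ^ 2 ≤ (X c - μ) ^ 2 := by
    intro c hc
    rw [hB, mem_filter] at hc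
    have hlt : bias (LBB2.fC c) < 2 ^ (-(ℓ:ℤ)) := lt_of_not_ge hc.2
    rw [hXbias] at hlt
    have hzp : ((2:ℝ) ^ (-(ℓ:ℤ))) = ((2:ℝ) ^ ℓ)⁻¹ := by
      rw [zpow_neg, zpow_natCast]
    rw [hzp, div_lt_iff₀ (by positivity)] at hlt
    have hXa : X c < a := by
      have : ((2:ℝ) ^ ℓ)⁻¹ * 2 ^ m = a := by
        rw [h2m]
        field_simp
      rw [this] at hlt
      exact hlt
    nlinarith [hXa, hμa, ha0]
  have hBcard : (B.card : ℝ) * a ^ 2 ≤ t * 2 ^ m := by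
    calc (B.card : ℝ) * a ^ 2 = ∑ _c ∈ B, a ^ 2 := by
          rw [Finset.sum_const, nsmul_eq_mul]
      _ ≤ ∑ c ∈ B, (X c - μ) ^ 2 := Finset.sum_le_sum hbad
      _ ≤ ∑ c : LBB2.Idx m r k → ZMod 2, (X c - μ) ^ 2 :=
          Finset.sum_le_sum_of_subset_of_nonneg (Finset.subset_univ B)
            (fun c _ _ => sq_nonneg _)
      _ ≤ t * 2 ^ m := hsq
  have hale : (2:ℝ) ^ (ℓ + 1) ≤ a := by
    rw [ha]
    apply pow_le_pow_right₀ (by norm_num)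
    omega
  have hBle : (B.card : ℝ) ≤ t / 2 := by
    have hB0 : (0:ℝ) ≤ (B.card : ℝ) := Nat.cast_nonneg _
    have hp : (0:ℝ) < 2 ^ ℓ := by positivity
    have s1 : (B.card : ℝ) * a ≤ t * 2 ^ ℓ := by
      have h' : ((B.card : ℝ) * a) * a ≤ (t * 2 ^ ℓ) * a := by
        calc ((B.card : ℝ) * a) * a = (B.card : ℝ) * a ^ 2 := by ring
          _ ≤ t * 2 ^ m := hBcard
          _ = (t * 2 ^ ℓ) * a := by rw [h2m]; ring
      exact le_of_mul_le_mul_right h' ha0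
    have s2 : ((B.card : ℝ) * 2) * 2 ^ ℓ ≤ t * 2 ^ ℓ := by
      calc ((B.card : ℝ) * 2) * 2 ^ ℓ = (B.card : ℝ) * 2 ^ (ℓ + 1) := by ring
        _ ≤ (B.card : ℝ) * a := mul_le_mul_of_nonneg_left hale hB0
        _ ≤ t * 2 ^ ℓ := s1
    have s3 : (B.card : ℝ) * 2 ≤ t := le_of_mul_le_mul_right s2 hp
    rw [le_div_iff₀ (by norm_num : (0:ℝ) < 2)]
    exact s3
  have hGB : (G.card : ℝ) + B.card = t := by
    have hBG : B = Gᶜ := by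
      rw [hG, hB]
      ext c
      simp
    have hnat : G.card + Gᶜ.card = 2 ^ N := by
      rw [Finset.card_add_card_compl, hcard_dom]
    rw [hBG, ht]
    exact_mod_cast hnat
  have hGge : t / 2 ≤ (G.card : ℝ) := by linarith
  -- the image of good parameters sits inside the target set
  set TS : Set (BF m) := {f : BF m | f ∈ RM m r ∧ (2:ℝ) ^ (-(ℓ:ℤ)) ≤ bias f} with hTS
  have hsubset : ↑(G.image (LBB2.fC (m := m) (r := r) (k := k))) ⊆ TS := by
    intro f hf
    simp only [Finset.coe_image, Set.mem_image, Finset.mem_coe] at hf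
    obtain ⟨c, hc, rfl⟩ := hf
    rw [hG, mem_filter] at hc
    exact ⟨LBB2.fC_mem_RM m r k c, hc.2⟩
  have himg : (G.image (LBB2.fC (m := m) (r := r) (k := k))).card = G.card :=
    Finset.card_image_of_injective G (LBB2.fC_injective m r k)
  have hncard : (G.card : ℝ) ≤ (Set.ncard TS : ℝ) := by
    have h1' := Set.ncard_le_ncard hsubset (Set.toFinite TS)
    rw [Set.ncard_coe_finset, himg] at h1'
    exact_mod_cast h1'
  -- the exponent sum is at most N
  have hSN : (∑ j ∈ Finset.Icc 1 (ℓ - 1), binomLe (m - j) (r - 1)) ≤ N := by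
    have hre : Finset.Icc 1 (ℓ - 1) = (Finset.range k).image (· + 1) := by
      ext j
      simp only [Finset.mem_Icc, Finset.mem_image, Finset.mem_range]
      constructor
      · intro hj; exact ⟨j - 1, by omega, by omega⟩
      · rintro ⟨i, hi, rfl⟩; omega
    rw [hre, Finset.sum_image (fun i _ j _ h => by omega)]
    have := LBB2.Mset_card_ge m r k hr1 hkm
    have hNc : N = (LBB2.Mset m r k).card := by
      rw [hN]; exact Fintype.card_coe _
    rw [hNc]
    exact this
  calc (1 / 2 : ℝ) * 2 ^ (∑ j ∈ Finset.Icc 1 (ℓ - 1), binomLe (m - j) (r - 1))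
      ≤ (1 / 2 : ℝ) * 2 ^ N := by
        have := pow_le_pow_right₀ (a := (2:ℝ)) (by norm_num) hSN
        linarith
    _ = t / 2 := by rw [ht]; ring
    _ ≤ (G.card : ℝ) := hGge
    _ ≤ (Set.ncard TS : ℝ) := hncard
end

section
/- Let f : F₂^m → F₂ be a function with bias(f) ≥ ε > 0 and let δ ∈ (0,1). Set t = ⌈2·log₂(1/ε) + log₂(1/δ) + 1⌉. Then there exist directions y₁, ..., y_t ∈ F₂^m such that Pr_{x ∈ F₂^m}[ f(x) = Maj( Δ_{Σ_{i∈I} y_i} f(x) : ∅ ≠ I ⊆ {1,...,t} ) ] ≥ 1 - δ. -/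
/-!
Fix a point x and pick the directions y ∈ (F₂^m)^t uniformly at random. The subset sums
y_I = ∑_{i ∈ I} y_i over nonempty I are uniform and pairwise independent, because
y ↦ (y_I, y_J) is a surjective homomorphism for I ≠ J. So the signs (-1)^{f(x + y_I)} are
pairwise uncorrelated with mean bias(f), and their sum S over the N = 2^t - 1 sets I has mean
N·bias(f) and variance at most N. Since Δ_{y_I} f(x) = f(x + y_I) + f(x), the majority of the
derivatives equals f(x) as soon as S > 0; by Chebyshev this fails with probability at most
1/(N ε²) ≤ δ, by the choice of t. Averaging over x, some fixed y errs on at most a δ-fraction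
of the points.
-/

open Finset

/-- Discrete derivative of f in direction y: Δ_y f(x) = f(x+y) + f(x). -/
def DD {m : ℕ} (y : Cube m) (f : BF m) : BF m := fun x => f (x + y) + f x

/-- Iterated discrete derivative Δ_Y f = Δ_{y₁}Δ_{y₂}···Δ_{y_k} f for a tuple
Y = (y₁,…,y_k) of directions. -/
def DDs {m k : ℕ} (Y : Fin k → Cube m) (f : BF m) : BF m :=
  (List.ofFn Y).foldr DD f

/-- Majority of a finite family of F₂ values: 1 if at least half of the values
equal 1, and 0 otherwise. -/
def Maj {ι : Type*} [Fintype ι] (v : ι → ZMod 2) : ZMod 2 :=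
  if Fintype.card ι ≤ 2 * (Finset.univ.filter fun i => v i = 1).card then 1 else 0

theorem AddMonoidHom.card_mul_sum_comp_of_surjective {G H : Type*} [AddGroup G] [AddMonoid H]
    [Fintype G] [Fintype H] (φ : G →+ H) (hφ : Function.Surjective φ) (F : H → ℝ) :
    Fintype.card H * ∑ g, F (φ g) = Fintype.card G * ∑ h, F h := by
  classical
  have hfiber : ∀ h, #{g | φ g = h} = #{g | φ g = 0} := fun h =>
    AddMonoidHom.card_fiber_eq_of_mem_range φ (hφ h) (hφ 0)
  have hcard : Fintype.card G = Fintype.card H * #{g | φ g = 0} := by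
    rw [← card_univ, card_eq_sum_card_fiberwise (f := φ) (t := univ) (fun _ _ => mem_univ _),
      sum_congr rfl fun h _ => hfiber h, sum_const, card_univ, smul_eq_mul]
  rw [sum_comp, image_univ_of_surjective hφ, hcard, Nat.cast_mul, mul_sum, mul_sum]
  refine sum_congr rfl fun h _ => ?_
  rw [hfiber h, nsmul_eq_mul]
  ring

section SubsetSums

variable {ι V : Type*} [AddCommGroup V]

def subsetSumHom (I : Finset ι) : (ι → V) →+ V :=
  ∑ i ∈ I, Pi.evalAddMonoidHom (fun _ => V) i

@[simp]
lemma subsetSumHom_apply (I : Finset ι) (y : ι → V) : subsetSumHom I y = ∑ i ∈ I, y i := by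
  simp [subsetSumHom]

lemma subsetSumHom_surjective {I : Finset ι} (hI : I.Nonempty) :
    Function.Surjective (subsetSumHom (V := V) I) := by
  classical
  obtain ⟨i, hi⟩ := hI
  exact fun a => ⟨Pi.single i a, by simp [sum_pi_single', hi]⟩

lemma subsetSumHom_prod_surjective_of_mem_of_notMem {I J : Finset ι} {k : ι} (hkI : k ∈ I)
    (hkJ : k ∉ J) (hJ : J.Nonempty) :
    Function.Surjective ((subsetSumHom (V := V) I).prod (subsetSumHom J)) := by
  classical
  obtain ⟨j, hj⟩ := hJ
  rintro ⟨a, b⟩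
  refine ⟨Pi.single k (a - if j ∈ I then b else 0) + Pi.single j b, ?_⟩
  simp [sum_add_distrib, sum_pi_single', hkI, hkJ, hj]

lemma subsetSumHom_prod_surjective {I J : Finset ι} (hI : I.Nonempty) (hJ : J.Nonempty)
    (hIJ : I ≠ J) : Function.Surjective ((subsetSumHom (V := V) I).prod (subsetSumHom J)) := by
  obtain ⟨k, hk⟩ := not_forall.1 (mt Finset.ext hIJ)
  by_cases hkI : k ∈ I
  · exact subsetSumHom_prod_surjective_of_mem_of_notMem hkI (by tauto : k ∉ J) hJ
  · intro p
    obtain ⟨y, hy⟩ :=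
      subsetSumHom_prod_surjective_of_mem_of_notMem (V := V) (by tauto : k ∈ J) hkI hI p.swap
    exact ⟨y, by simpa using congrArg Prod.swap hy⟩

variable [Fintype ι] [DecidableEq ι] [Fintype V]

lemma card_mul_sum_comp_subsetSum {I : Finset ι} (hI : I.Nonempty) (g : V → ℝ) :
    Fintype.card V * ∑ y : ι → V, g (∑ i ∈ I, y i) = Fintype.card (ι → V) * ∑ v, g v := by
  simpa using (subsetSumHom I).card_mul_sum_comp_of_surjective (subsetSumHom_surjective hI) g

lemma card_sq_mul_sum_comp_subsetSum_mul {I J : Finset ι} (hI : I.Nonempty) (hJ : J.Nonempty)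
    (hIJ : I ≠ J) (g : V → ℝ) :
    Fintype.card V ^ 2 * ∑ y : ι → V, g (∑ i ∈ I, y i) * g (∑ j ∈ J, y j) =
      Fintype.card (ι → V) * (∑ v, g v) ^ 2 := by
  have := ((subsetSumHom I).prod (subsetSumHom J)).card_mul_sum_comp_of_surjective
    (subsetSumHom_prod_surjective hI hJ hIJ) fun p : V × V => g p.1 * g p.2
  simpa [Fintype.sum_prod_type, ← sum_mul_sum, sq] using this

end SubsetSums

lemma card_nonempty_finset (ι : Type*) [Fintype ι] :
    Fintype.card {I : Finset ι // I.Nonempty} = 2 ^ Fintype.card ι - 1 := by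
  classical
  simp [Fintype.card_subtype, Finset.nonempty_iff_ne_empty, filter_ne', card_univ]

section PairwiseUncorrelatedSigns

variable {Ω ι : Type*} [Fintype Ω] [Fintype ι] (X : ι → Ω → ℝ) {μ : ℝ}
  (hsq : ∀ i ω, X i ω ^ 2 = 1) (hmean : ∀ i, ∑ ω, X i ω = Fintype.card Ω * μ)
  (hcov : Pairwise fun i j => ∑ ω, X i ω * X j ω = Fintype.card Ω * μ ^ 2)
include hsq hmean hcov

lemma sum_sq_sum_sub_eq :
    ∑ ω, (∑ i, X i ω - Fintype.card ι * μ) ^ 2 =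
      Fintype.card Ω * Fintype.card ι * (1 - μ ^ 2) := by
  classical
  set N : ℝ := (Fintype.card ι : ℝ)
  set M : ℝ := (Fintype.card Ω : ℝ)
  have hrow : ∀ i, ∑ j, ∑ ω, X i ω * X j ω = M * (1 - μ ^ 2) + N * (M * μ ^ 2) := by
    intro i
    rw [← add_sum_erase _ _ (mem_univ i),
      sum_congr rfl fun j hj => hcov (ne_of_mem_erase hj).symm, sum_const,
      card_erase_of_mem (mem_univ i), card_univ, nsmul_eq_mul,
      Nat.cast_sub (Fintype.card_pos_iff.2 ⟨i⟩)]
    simp only [← sq, hsq, sum_const, card_univ, nsmul_eq_mul, mul_one]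
    ring
  have hS2 : ∑ ω, (∑ i, X i ω) ^ 2 = ∑ i, ∑ j, ∑ ω, X i ω * X j ω := by
    simp only [sq, sum_mul_sum]
    rw [sum_comm]
    exact sum_congr rfl fun _ _ => sum_comm
  have hS1 : ∑ ω, ∑ i, X i ω = N * (M * μ) := by
    rw [sum_comm, sum_congr rfl fun i _ => hmean i, sum_const, card_univ, nsmul_eq_mul]
  simp only [sub_sq, sum_add_distrib, sum_sub_distrib, ← sum_mul, ← mul_sum, hS2, hS1,
    sum_congr rfl fun i _ => hrow i, sum_const, card_univ, nsmul_eq_mul]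
  ring

theorem card_sum_nonpos_mul_le (hμ : 0 ≤ μ) :
    #{ω | ∑ i, X i ω ≤ 0} * (Fintype.card ι * μ ^ 2) ≤ Fintype.card Ω := by
  set N : ℝ := (Fintype.card ι : ℝ)
  set M : ℝ := (Fintype.card Ω : ℝ)
  set S : Ω → ℝ := fun ω => ∑ i, X i ω
  have hfar : ∀ ω ∈ ({ω | S ω ≤ 0} : Finset Ω), (N * μ) ^ 2 ≤ (S ω - N * μ) ^ 2 := by
    intro ω hω
    have hSω : S ω ≤ 0 := (mem_filter.1 hω).2
    have : 0 ≤ N * μ := by positivity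
    nlinarith
  have hbound : #{ω | S ω ≤ 0} * (N * μ) ^ 2 ≤ M * N := by
    calc #{ω | S ω ≤ 0} * (N * μ) ^ 2 = ∑ ω ∈ {ω | S ω ≤ 0}, (N * μ) ^ 2 := by
          rw [sum_const, nsmul_eq_mul]
      _ ≤ ∑ ω ∈ {ω | S ω ≤ 0}, (S ω - N * μ) ^ 2 := sum_le_sum hfar
      _ ≤ ∑ ω, (S ω - N * μ) ^ 2 := sum_le_sum_of_subset_of_nonneg (subset_univ _)
          fun _ _ _ => sq_nonneg _
      _ = M * N * (1 - μ ^ 2) := sum_sq_sum_sub_eq X hsq hmean hcov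
      _ ≤ M * N := by nlinarith [sq_nonneg μ, (by positivity : 0 ≤ M * N)]
  rcases (show (0 : ℝ) ≤ N by positivity).eq_or_lt with hN | hN
  · rw [← hN, zero_mul, mul_zero]
    positivity
  · nlinarith

end PairwiseUncorrelatedSigns

lemma exists_le_card_filter_of_forall_le {α β : Type*} [Fintype α] [Fintype β] [Nonempty β]
    (P : α → β → Prop) [∀ a b, Decidable (P a b)] {c : ℝ}
    (h : ∀ a, c * Fintype.card β ≤ #{b | P a b}) : ∃ b, c * Fintype.card α ≤ #{a | P a b} := by
  have hdouble : ∑ a, (#{b | P a b} : ℝ) = ∑ b, (#{a | P a b} : ℝ) := by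
    simp only [card_filter, Nat.cast_sum]
    exact sum_comm
  obtain ⟨b, -, hb⟩ := exists_le_of_sum_le (univ_nonempty (α := β))
    (f := fun _ => c * Fintype.card α) (g := fun b => (#{a | P a b} : ℝ)) <| by
      calc ∑ _b : β, c * Fintype.card α = ∑ _a : α, c * Fintype.card β := by
            simp only [sum_const, card_univ, nsmul_eq_mul]; ring
        _ ≤ ∑ a, (#{b | P a b} : ℝ) := sum_le_sum fun a _ => h a
        _ = _ := hdouble
  exact ⟨b, hb⟩

lemma zmodTwo_eq_zero_or_eq_one (a : ZMod 2) : a = 0 ∨ a = 1 := by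
  decide +revert

def pmSign (a : ZMod 2) : ℝ := if a = 0 then 1 else -1

lemma pmSign_sq (a : ZMod 2) : pmSign a ^ 2 = 1 := by
  unfold pmSign; split_ifs <;> norm_num

lemma pmSign_add_one (a : ZMod 2) : pmSign (a + 1) = -pmSign a := by
  rcases zmodTwo_eq_zero_or_eq_one a with rfl | rfl <;> simp [pmSign, CharTwo.add_self_eq_zero]

lemma sum_pmSign_eq_card_sub {ι : Type*} [Fintype ι] (v : ι → ZMod 2) :
    ∑ i, pmSign (v i) = Fintype.card ι - 2 * #{i | v i = 1} := by
  have hv : ∀ b, pmSign b = 1 - 2 * if b = 1 then 1 else 0 := by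
    intro b; rcases zmodTwo_eq_zero_or_eq_one b with rfl | rfl <;> norm_num [pmSign]
  simp only [hv, sum_sub_distrib, ← mul_sum, sum_boole, sum_const, card_univ, nsmul_eq_mul,
    mul_one]

lemma sum_pmSign_nonpos_of_maj_add_ne {ι : Type*} [Fintype ι] (v : ι → ZMod 2) (a : ZMod 2)
    (h : Maj (fun i => v i + a) ≠ a) : ∑ i, pmSign (v i) ≤ 0 := by
  rcases zmodTwo_eq_zero_or_eq_one a with rfl | rfl
  · have hmaj : Fintype.card ι ≤ 2 * #{i | v i = 1} := by
      by_contra hlt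
      exact h (by simp only [Maj, add_zero]; exact if_neg hlt)
    rw [sum_pmSign_eq_card_sub, sub_nonpos]
    exact_mod_cast hmaj
  · have hmaj : 2 * #{i | v i + 1 = 1} < Fintype.card ι := by
      by_contra hle
      exact h (if_pos (not_lt.1 hle))
    have hflip := sum_pmSign_eq_card_sub fun i => v i + 1
    simp only [pmSign_add_one, sum_neg_distrib] at hflip
    have : (2 * #{i | v i + 1 = 1} : ℝ) < Fintype.card ι := by exact_mod_cast hmaj
    linarith

lemma sum_pmSign_add {m : ℕ} (f : BF m) (x : Cube m) :
    ∑ v, pmSign (f (x + v)) = 2 ^ m * bias f := by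
  rw [Fintype.sum_equiv (Equiv.addLeft x) (fun v => pmSign (f (x + v))) (fun v => pmSign (f v))
    fun _ => rfl, bias, mul_div_cancel₀ _ (by positivity)]
  rfl

lemma bias_le_one {m : ℕ} (f : BF m) : bias f ≤ 1 := by
  rw [bias, div_le_one (by positivity)]
  calc ∑ x, (if f x = 0 then (1 : ℝ) else -1) ≤ ∑ _x : Cube m, (1 : ℝ) :=
        sum_le_sum fun x _ => by split_ifs <;> norm_num
    _ = 2 ^ m := by simp

section MajorityDerivative

variable {m : ℕ} {ι : Type*} [Fintype ι]

def majorityDerivative (f : BF m) (y : ι → Cube m) : BF m := fun x =>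
  Maj fun I : {I : Finset ι // I.Nonempty} => DD (∑ i ∈ I.1, y i) f x

variable [DecidableEq ι]

lemma card_ne_majorityDerivative_mul_le (f : BF m) (hf : 0 ≤ bias f) (x : Cube m) :
    #{y : ι → Cube m | f x ≠ majorityDerivative f y x} * ((2 ^ Fintype.card ι - 1) * bias f ^ 2)
      ≤ Fintype.card (ι → Cube m) := by
  set X : {I : Finset ι // I.Nonempty} → (ι → Cube m) → ℝ :=
    fun I y => pmSign (f (x + ∑ i ∈ I.1, y i))
  have hcardV : (Fintype.card (Cube m) : ℝ) = 2 ^ m := by simp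
  have hmean : ∀ I, ∑ y, X I y = Fintype.card (ι → Cube m) * bias f := by
    intro I
    have h := card_mul_sum_comp_subsetSum I.2 fun v => pmSign (f (x + v))
    rw [sum_pmSign_add, hcardV, mul_left_comm] at h
    exact mul_left_cancel₀ (by positivity) h
  have hcov : Pairwise fun I J => ∑ y, X I y * X J y = Fintype.card (ι → Cube m) * bias f ^ 2 := by
    intro I J hIJ
    have h := card_sq_mul_sum_comp_subsetSum_mul I.2 J.2 (Subtype.coe_injective.ne hIJ)
      fun v => pmSign (f (x + v))
    rw [sum_pmSign_add, hcardV, mul_pow, mul_left_comm] at h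
    exact mul_left_cancel₀ (by positivity) h
  have hN : (Fintype.card {I : Finset ι // I.Nonempty} : ℝ) = 2 ^ Fintype.card ι - 1 := by
    rw [card_nonempty_finset, Nat.cast_sub Nat.one_le_two_pow]
    norm_num
  calc _ ≤ (#{y | ∑ I, X I y ≤ 0} : ℝ) * ((2 ^ Fintype.card ι - 1) * bias f ^ 2) := by
        gcongr
        · rw [← hN]; positivity
        exact fun hy => sum_pmSign_nonpos_of_maj_add_ne _ (f x) (Ne.symm hy)
    _ ≤ _ := hN ▸ card_sum_nonpos_mul_le X (fun _ _ => pmSign_sq _) hmean hcov hf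

lemma le_card_eq_majorityDerivative (f : BF m) {ε δ : ℝ} (hε : 0 ≤ ε) (hbias : ε ≤ bias f)
    (hN : 1 ≤ (2 ^ Fintype.card ι - 1) * ε ^ 2 * δ) (x : Cube m) :
    (1 - δ) * Fintype.card (ι → Cube m) ≤ #{y : ι → Cube m | f x = majorityDerivative f y x} := by
  set N : ℝ := 2 ^ Fintype.card ι - 1
  have hN0 : 0 ≤ N := sub_nonneg.2 (one_le_pow₀ one_le_two)
  have hδ : 0 ≤ δ := by
    by_contra! hδ
    nlinarith [mul_nonneg hN0 (sq_nonneg ε)]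
  have hbad := card_ne_majorityDerivative_mul_le (ι := ι) f (hε.trans hbias) x
  have hsplit := card_filter_add_card_filter_not (s := univ)
    fun y : ι → Cube m => f x = majorityDerivative f y x
  rw [card_univ] at hsplit
  have hsq : ε ^ 2 ≤ bias f ^ 2 := pow_le_pow_left₀ hε hbias 2
  set B : ℝ := (#{y : ι → Cube m | ¬f x = majorityDerivative f y x} : ℝ)
  have hB : B ≤ δ * Fintype.card (ι → Cube m) := by
    have hB0 : 0 ≤ B := Nat.cast_nonneg _
    calc B ≤ B * (N * ε ^ 2 * δ) := le_mul_of_one_le_right hB0 hN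
      _ = B * (N * ε ^ 2) * δ := by ring
      _ ≤ B * (N * bias f ^ 2) * δ := by gcongr
      _ ≤ Fintype.card (ι → Cube m) * δ := mul_le_mul_of_nonneg_right hbad hδ
      _ = _ := mul_comm _ _
  have hsplitR := congrArg (Nat.cast : ℕ → ℝ) hsplit
  push_cast at hsplitR
  linarith

end MajorityDerivative

lemma one_le_two_pow_ceil_sub_one_mul {ε δ : ℝ} (hε0 : 0 < ε) (hε1 : ε ≤ 1) (hδ0 : 0 < δ)
    (hδ1 : δ ≤ 1) :
    1 ≤ (2 ^ ⌈2 * Real.logb 2 (1 / ε) + Real.logb 2 (1 / δ) + 1⌉₊ - 1) * ε ^ 2 * δ := by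
  set r := 2 * Real.logb 2 (1 / ε) + Real.logb 2 (1 / δ) + 1
  have h2r : (2 : ℝ) ^ r = 2 / (ε ^ 2 * δ) := by
    have hsq : 2 * Real.logb 2 (1 / ε) = Real.logb 2 ((1 / ε) ^ 2) := by
      rw [Real.logb_pow]; norm_num
    rw [Real.rpow_add two_pos, Real.rpow_add two_pos, hsq,
      Real.rpow_logb two_pos (by norm_num) (by positivity),
      Real.rpow_logb two_pos (by norm_num) (by positivity), Real.rpow_one]
    field_simp
  have hpow : 2 / (ε ^ 2 * δ) ≤ (2 : ℝ) ^ ⌈r⌉₊ := by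
    rw [← h2r, ← Real.rpow_natCast]
    exact Real.rpow_le_rpow_of_exponent_le one_le_two (Nat.le_ceil r)
  have hεδ : 0 < ε ^ 2 * δ := by positivity
  have hεδ1 : ε ^ 2 * δ ≤ 1 := by nlinarith [pow_le_one₀ hε0.le hε1 (n := 2)]
  rw [div_le_iff₀ hεδ] at hpow
  nlinarith

/-- a function with bias at least ε is (1-δ)-approximated by the
majority of the derivatives along all nonempty subset-sums of
t = ⌈2log₂(1/ε) + log₂(1/δ) + 1⌉ directions (Lemma 2.4 of
Kaufman–Lovett–Porat, `KPL2`). -/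
theorem low_bias_approx_by_derivatives (m : ℕ) (f : BF m) (ε δ : ℝ)
    (hε : 0 < ε) (hbias : ε ≤ bias f) (hδ0 : 0 < δ) (hδ1 : δ < 1) :
    ∃ y : Fin ⌈2 * Real.logb 2 (1 / ε) + Real.logb 2 (1 / δ) + 1⌉₊ → Cube m,
      1 - δ ≤
        (((Finset.univ.filter fun x : Cube m =>
              f x = Maj fun I :
                  {I : Finset (Fin ⌈2 * Real.logb 2 (1 / ε) +
                      Real.logb 2 (1 / δ) + 1⌉₊) // I.Nonempty} =>
                DD (∑ i ∈ I.1, y i) f x).card : ℝ) / 2 ^ m) := by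
  have hN := one_le_two_pow_ceil_sub_one_mul hε (hbias.trans (bias_le_one f)) hδ0 hδ1.le
  rw [← Fintype.card_fin ⌈2 * Real.logb 2 (1 / ε) + Real.logb 2 (1 / δ) + 1⌉₊] at hN
  obtain ⟨y, hy⟩ := exists_le_card_filter_of_forall_le _
    (le_card_eq_majorityDerivative f hε.le hbias hN)
  have hcard : (Fintype.card (Cube m) : ℝ) = 2 ^ m := by simp
  rw [hcard] at hy
  exact ⟨y, (le_div_iff₀ (by positivity)).2 hy⟩
end

section
/- Let k, t, r, m be natural numbers with t ≥ 1 and 1 ≤ k ≤ r ≤ m. Then |A_{k,t}| ≤ 2^{m·t·k + t·binom(m-k, ≤ r-k)}. -/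
open Finset

/-- The net A_{k,t}: all pointwise majorities of t order-k derivatives of a
polynomial of degree at most r. -/
def Anet (m r k t : ℕ) : Set (BF m) :=
  {g | ∃ f ∈ RM m r, ∃ Y : Fin t → Fin k → Cube m,
    g = fun x => Maj fun i => DDs (Y i) f x}

/-!
Expanding the iterated derivative gives `Δ_Y f (x) = ∑_{c ∈ F₂^k} f (x + ∑ cᵢ yᵢ)`. If `Y` is
linearly dependent, translating `c` by a nontrivial relation pairs up equal terms, so `Δ_Y f = 0`.
Otherwise extend `Y` to a basis: in its coordinates `Δ_Y f (x)` is the sum of `f` over all values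
of the first `k` coordinates. Since `∑_{b ∈ F₂} bᵉ` vanishes exactly when `e = 0`, only the
monomials containing all of the first `k` variables survive, and what remains is a multilinear
function of degree at most `r - k` in the other `m - k` coordinates. So each `Δ_Y (RM m r)` has at
most `2 ^ binom(m - k, ≤ r - k)` elements, and an element of `A_{k,t}` is determined by the `t`
direction tuples together with `t` such derivatives.
-/

open MvPolynomial

theorem ZMod.sum_two {M : Type*} [AddCommMonoid M] (F : ZMod 2 → M) : ∑ b, F b = F 0 + F 1 := by
  rw [show (univ : Finset (ZMod 2)) = {0, 1} from rfl, sum_pair zero_ne_one]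

theorem ZMod.sum_two_pow (e : ℕ) : ∑ b : ZMod 2, b ^ e = if e ≠ 0 then 1 else 0 := by
  rw [ZMod.sum_two]
  rcases e with _ | e
  · rfl
  · simp

theorem ZMod.two_pow_eq_self (x : ZMod 2) {e : ℕ} (he : e ≠ 0) : x ^ e = x := by
  fin_cases x
  exacts [zero_pow he, one_pow e]

theorem MvPolynomial.totalDegree_aeval_le {R σ τ : Type*} [CommSemiring R]
    (p : MvPolynomial σ R) {g : σ → MvPolynomial τ R} (hg : ∀ i, (g i).IsHomogeneous 1) :
    (aeval g p).totalDegree ≤ p.totalDegree := by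
  conv_lhs => rw [← sum_homogeneousComponent p]
  rw [map_sum]
  refine (totalDegree_finsetSum _ _).trans (Finset.sup_le fun n hn => ?_)
  refine (((homogeneousComponent_isHomogeneous n p).aeval g hg).totalDegree_le).trans ?_
  rw [one_mul]
  exact Nat.lt_succ_iff.mp (Finset.mem_range.mp hn)

-- `RM m r` is `polyFunctions (Fin m) r` by definition.
def polyFunctions (σ : Type*) (d : ℕ) : Set ((σ → ZMod 2) → ZMod 2) :=
  {f | ∃ p : MvPolynomial σ (ZMod 2), p.totalDegree ≤ d ∧ ∀ x, eval x p = f x}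

theorem polyFunctions.comp_linearMap {σ τ : Type*} [Fintype τ] [DecidableEq τ] {d : ℕ}
    {f : (σ → ZMod 2) → ZMod 2} (hf : f ∈ polyFunctions σ d)
    (L : (τ → ZMod 2) →ₗ[ZMod 2] σ → ZMod 2) : f ∘ L ∈ polyFunctions τ d := by
  obtain ⟨p, hp, hpf⟩ := hf
  let ℓ : σ → MvPolynomial τ (ZMod 2) := fun s => ∑ t, C (L (Pi.single t 1) s) * X t
  refine ⟨aeval ℓ p, (p.totalDegree_aeval_le fun s => ?_).trans hp, fun x => ?_⟩
  · exact IsHomogeneous.sum _ _ _ fun t _ => isHomogeneous_C_mul_X _ _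
  · have hℓ : (fun s => eval x (ℓ s)) = L x := by
      ext s
      simp only [ℓ, map_sum, map_mul, eval_C, eval_X, L.pi_apply_eq_sum_univ x]
      rw [Finset.sum_apply]
      refine Finset.sum_congr rfl fun t _ => ?_
      have hsingle : (fun j => if t = j then (1 : ZMod 2) else 0) = Pi.single t 1 := by
        ext j
        simp [Pi.single_apply, eq_comm]
      rw [Pi.smul_apply, smul_eq_mul, mul_comm, hsingle]
    change eval₂Hom (RingHom.id _) x (bind₁ ℓ p) = f (L x)
    rw [eval₂Hom_bind₁, ← hpf]
    exact congrArg (fun y => eval y p) hℓ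

def monomialFn {ι : Type*} (T : Finset ι) (w : ι → ZMod 2) : ZMod 2 := ∏ j ∈ T, w j

def multilinearSpan (ι : Type*) (d : ℕ) : Submodule (ZMod 2) ((ι → ZMod 2) → ZMod 2) :=
  Submodule.span (ZMod 2) (Set.range fun T : {T : Finset ι // T.card ≤ d} => monomialFn T.1)

theorem card_subtype_card_le_eq_binomLe (ι : Type*) [Fintype ι] (d : ℕ) :
    Fintype.card {T : Finset ι // T.card ≤ d} = binomLe (Fintype.card ι) d := by
  rw [Fintype.card_subtype, binomLe,
    card_eq_sum_card_fiberwise (f := Finset.card) (t := range (d + 1)) fun T hT => by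
      simpa [Nat.lt_succ_iff] using hT]
  refine sum_congr rfl fun i hi => ?_
  rw [← card_univ, ← card_powersetCard, powersetCard_eq_filter, powerset_univ, filter_filter]
  congr 1
  ext T
  simp only [mem_filter, mem_univ, true_and, and_iff_right_iff_imp]
  rintro rfl
  exact Nat.lt_succ_iff.mp (mem_range.mp hi)

theorem ncard_multilinearSpan_le (ι : Type*) [Fintype ι] (d : ℕ) :
    (multilinearSpan ι d : Set ((ι → ZMod 2) → ZMod 2)).ncard ≤
      2 ^ binomLe (Fintype.card ι) d := by
  rw [← Nat.card_coe_set_eq, SetLike.coe_sort_coe, Module.natCard_eq_pow_finrank (K := ZMod 2),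
    Nat.card_zmod, ← card_subtype_card_le_eq_binomLe]
  exact Nat.pow_le_pow_right two_pos (finrank_range_le_card _)

theorem card_filter_inr_ne_zero_le {κ ι : Type*} [Fintype κ] [Fintype ι] {d : ℕ}
    {e : κ ⊕ ι → ℕ} (he : ∑ s, e s ≤ d) (hinl : ∀ i, e (.inl i) ≠ 0) :
    (univ.filter fun j => e (.inr j) ≠ 0).card ≤ d - Fintype.card κ := by
  rw [Fintype.sum_sum_type] at he
  have hκ : Fintype.card κ ≤ ∑ i, e (.inl i) := by
    simpa using Finset.card_nsmul_le_sum univ _ 1 fun i _ => Nat.one_le_iff_ne_zero.mpr (hinl i)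
  have hι : (univ.filter fun j => e (.inr j) ≠ 0).card ≤ ∑ j, e (.inr j) := by
    rw [card_filter]
    exact sum_le_sum fun j _ => by split_ifs with h <;> omega
  omega

section FiberSum

variable {κ ι : Type*} [Fintype κ] [DecidableEq κ]

def fiberSum (g : (κ ⊕ ι → ZMod 2) → ZMod 2) (w : ι → ZMod 2) : ZMod 2 :=
  ∑ u : κ → ZMod 2, g (Sum.elim u w)

variable [Fintype ι]

theorem sum_prod_sumElim_pow (e : κ ⊕ ι → ℕ) :
    (fun w => ∑ u : κ → ZMod 2, ∏ s, Sum.elim u w s ^ e s) =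
      if ∀ i, e (.inl i) ≠ 0 then monomialFn (univ.filter fun j => e (.inr j) ≠ 0) else 0 := by
  ext w
  simp only [Fintype.prod_sum_type, Sum.elim_inl, Sum.elim_inr, ← Finset.sum_mul]
  rw [← Fintype.prod_sum (fun i b => b ^ e (.inl i))]
  simp only [ZMod.sum_two_pow, prod_boole, mem_univ, true_imp_iff]
  split_ifs
  · rw [one_mul, monomialFn, prod_filter]
    refine prod_congr rfl fun j _ => ?_
    split_ifs with hj
    exacts [ZMod.two_pow_eq_self _ hj, by rw [not_not.mp hj, pow_zero]]
  · rw [zero_mul, Pi.zero_apply]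

theorem fiberSum_mem_multilinearSpan {d : ℕ} {g : (κ ⊕ ι → ZMod 2) → ZMod 2}
    (hg : g ∈ polyFunctions (κ ⊕ ι) d) : fiberSum g ∈ multilinearSpan ι (d - Fintype.card κ) := by
  obtain ⟨p, hp, hpg⟩ := hg
  have hsum : fiberSum g =
      ∑ a ∈ p.support, coeff a p • fun w => ∑ u : κ → ZMod 2, ∏ s, Sum.elim u w s ^ a s := by
    ext w
    simp only [fiberSum, ← hpg, eval_eq', Finset.sum_apply, Pi.smul_apply, smul_eq_mul,
      Finset.mul_sum]
    exact Finset.sum_comm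
  rw [hsum]
  refine Submodule.sum_mem _ fun a ha => Submodule.smul_mem _ _ ?_
  rw [sum_prod_sumElim_pow]
  split_ifs with hinl
  · have hdeg : ∑ s, a s ≤ d := (Finsupp.sum_fintype _ _ fun _ => rfl).symm.trans_le
      ((le_totalDegree ha).trans hp)
    exact Submodule.subset_span ⟨⟨_, card_filter_inr_ne_zero_le hdeg hinl⟩, rfl⟩
  · exact Submodule.zero_mem _

end FiberSum

theorem DDs_succ {m n : ℕ} (Y : Fin (n + 1) → Cube m) (f : BF m) :
    DDs Y f = DD (Y 0) (DDs (Fin.tail Y) f) := by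
  simp only [DDs, List.ofFn_succ, List.foldr_cons]
  rfl

theorem DDs_apply {m k : ℕ} (Y : Fin k → Cube m) (f : BF m) (x : Cube m) :
    DDs Y f x = ∑ c : Fin k → ZMod 2, f (x + ∑ i, c i • Y i) := by
  induction k generalizing x with
  | zero => simp [DDs]
  | succ n ih =>
    rw [DDs_succ, DD, ih, ih, ← (Fin.consEquiv fun _ => ZMod 2).sum_comp, Fintype.sum_prod_type,
      ZMod.sum_two]
    simp [Fin.sum_univ_succ, Fin.tail, add_assoc, add_comm]

theorem DDs_eq_zero_of_not_linearIndependent {m k : ℕ} {Y : Fin k → Cube m}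
    (hY : ¬LinearIndependent (ZMod 2) Y) (f : BF m) : DDs Y f = 0 := by
  obtain ⟨g, hg, i, hi⟩ := Fintype.not_linearIndependent_iff.mp hY
  ext x
  rw [DDs_apply, Pi.zero_apply]
  refine sum_involution (fun c _ => c + g) (fun c _ => ?_) (fun c _ _ h => ?_)
    (fun _ _ => mem_univ _) (fun c _ => ?_)
  · rw [show x + ∑ j, (c + g) j • Y j = x + ∑ j, c j • Y j by
      simp [add_smul, sum_add_distrib, hg]]
    exact CharTwo.add_self_eq_zero _
  · exact hi (congrFun (add_eq_left.mp h) i)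
  · ext j
    rw [Pi.add_apply, Pi.add_apply, add_assoc, CharTwo.add_self_eq_zero, add_zero]

theorem DDs_eq_fiberSum {m k : ℕ} {ι : Type*} [Fintype ι] {Y : Fin k → Cube m}
    (b : Module.Basis (Fin k ⊕ ι) (ZMod 2) (Cube m)) (hb : ∀ i, b (.inl i) = Y i) (f : BF m) :
    DDs Y f = fun x => fiberSum (f ∘ b.equivFun.symm) fun j => b.repr x (.inr j) := by
  ext x
  have hcoord : ∀ c : Fin k → ZMod 2, x + ∑ i, c i • Y i =
      b.equivFun.symm (Sum.elim (c + fun i => b.repr x (.inl i)) fun j => b.repr x (.inr j)) := by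
    intro c
    have hx := (b.sum_repr x).symm
    rw [Fintype.sum_sum_type] at hx
    simp only [hb] at hx
    rw [b.equivFun_symm_apply, Fintype.sum_sum_type]
    simp only [Sum.elim_inl, Sum.elim_inr, Pi.add_apply, add_smul, sum_add_distrib, hb]
    conv_lhs => rw [hx]
    abel
  simp only [DDs_apply, hcoord, fiberSum, Function.comp_apply]
  exact Fintype.sum_equiv (Equiv.addRight _) _ _ fun _ => rfl

theorem Module.Basis.sumExtend_apply_inl {K V ι : Type*} [DivisionRing K] [AddCommGroup V]
    [Module K V] {v : ι → V} (hs : LinearIndependent K v) (i : ι) :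
    Module.Basis.sumExtend hs (.inl i) = v i := by
  simp only [Module.Basis.sumExtend, Module.Basis.reindex_apply, Module.Basis.extend_apply_self]
  rfl

theorem ncard_image_DDs_le {m r k : ℕ} (Y : Fin k → Cube m) :
    (DDs Y '' RM m r).ncard ≤ 2 ^ binomLe (m - k) (r - k) := by
  by_cases hY : LinearIndependent (ZMod 2) Y
  · let b := Module.Basis.sumExtend hY
    let ι := Module.Basis.sumExtendIndex hY
    have : Fintype ι := Fintype.ofFinite ι
    have hcard : Fintype.card ι = m - k := by
      have := (Module.finrank_eq_card_basis b).symm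
      rw [Fintype.card_sum, Fintype.card_fin, Module.finrank_fin_fun] at this
      exact Nat.eq_sub_of_add_eq' this
    let restrict : ((ι → ZMod 2) → ZMod 2) → BF m := fun g x => g fun j => b.repr x (.inr j)
    have hsub : DDs Y '' RM m r ⊆ restrict '' multilinearSpan ι (r - k) := by
      rintro _ ⟨f, hf, rfl⟩
      have hcomp := polyFunctions.comp_linearMap hf b.equivFun.symm.toLinearMap
      refine ⟨_, ?_, (DDs_eq_fiberSum b (Module.Basis.sumExtend_apply_inl hY) f).symm⟩
      have := fiberSum_mem_multilinearSpan hcomp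
      rw [Fintype.card_fin] at this
      exact this
    calc (DDs Y '' RM m r).ncard
        ≤ (restrict '' multilinearSpan ι (r - k)).ncard := Set.ncard_le_ncard hsub (Set.toFinite _)
      _ ≤ (multilinearSpan ι (r - k) : Set ((ι → ZMod 2) → ZMod 2)).ncard :=
          Set.ncard_image_le (Set.toFinite _)
      _ ≤ 2 ^ binomLe (m - k) (r - k) := hcard ▸ ncard_multilinearSpan_le ι (r - k)
  · have hsub : DDs Y '' RM m r ⊆ {0} := by
      rintro _ ⟨f, -, rfl⟩
      exact DDs_eq_zero_of_not_linearIndependent hY f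
    calc (DDs Y '' RM m r).ncard ≤ ({0} : Set (BF m)).ncard :=
          Set.ncard_le_ncard hsub (Set.toFinite _)
      _ ≤ 2 ^ binomLe (m - k) (r - k) := by rw [Set.ncard_singleton]; exact Nat.one_le_two_pow

theorem Set.ncard_univ_pi {ι β : Type*} [Fintype ι] [DecidableEq ι] [Finite β] (s : ι → Set β) :
    (Set.univ.pi s).ncard = ∏ i, (s i).ncard := by
  classical
  have := Fintype.ofFinite β
  have hs : Set.univ.pi s = Set.univ.pi fun i => ((s i).toFinset : Set β) := by simp
  rw [hs, ← Fintype.coe_piFinset, Set.ncard_coe_finset, Fintype.card_piFinset]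
  simp only [Set.ncard_eq_toFinset_card']

theorem ncard_iUnion_image_pi_le {α β γ ι : Type*} [Fintype α] [Fintype ι] [DecidableEq ι]
    [Finite β] (D : α → Set β) (F : (ι → β) → γ) {B : ℕ} (hD : ∀ a, (D a).ncard ≤ B) :
    (⋃ Y : ι → α, F '' Set.univ.pi fun i => D (Y i)).ncard ≤
      (Fintype.card α * B) ^ Fintype.card ι := by
  calc (⋃ Y : ι → α, F '' Set.univ.pi fun i => D (Y i)).ncard
      ≤ ∑ Y : ι → α, (F '' Set.univ.pi fun i => D (Y i)).ncard := Set.ncard_iUnion_le_of_fintype _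
    _ ≤ ∑ _Y : ι → α, B ^ Fintype.card ι := sum_le_sum fun Y _ => by
        refine (Set.ncard_image_le (Set.toFinite _)).trans ?_
        rw [Set.ncard_univ_pi]
        exact prod_le_pow_card _ _ _ fun i _ => hD (Y i)
    _ = (Fintype.card α * B) ^ Fintype.card ι := by
        rw [sum_const, card_univ, Fintype.card_fun, smul_eq_mul, mul_pow]

theorem Anet_card_bound_general (m r k t : ℕ) :
    (Anet m r k t).ncard ≤ 2 ^ (m * t * k + t * binomLe (m - k) (r - k)) := by
  have hsub : Anet m r k t ⊆ ⋃ Y : Fin t → Fin k → Cube m,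
      (fun g : Fin t → BF m => fun x => Maj fun i => g i x) ''
        Set.univ.pi fun i => DDs (Y i) '' RM m r := by
    rintro _ ⟨f, hf, Y, rfl⟩
    exact Set.mem_iUnion.mpr ⟨Y, fun i => DDs (Y i) f, fun i _ => ⟨f, hf, rfl⟩, rfl⟩
  calc (Anet m r k t).ncard
      ≤ (Fintype.card (Fin k → Cube m) * 2 ^ binomLe (m - k) (r - k)) ^ Fintype.card (Fin t) :=
        (Set.ncard_le_ncard hsub (Set.toFinite _)).trans
          (ncard_iUnion_image_pi_le (fun Y => DDs Y '' RM m r) _ fun Y => ncard_image_DDs_le Y)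
    _ = 2 ^ (m * t * k + t * binomLe (m - k) (r - k)) := by
        simp only [Fintype.card_fun, ZMod.card, Fintype.card_fin, ← pow_mul, ← pow_add]
        ring_nf

/-- |A_{k,t}| ≤ 2^{mtk + t·binom(m-k, ≤ r-k)}
(Proposition `bound for derivatives from asw`). -/
theorem Anet_card_bound (m r k t : ℕ) (ht : 1 ≤ t) (hk : 1 ≤ k) (hkr : k ≤ r)
    (hrm : r ≤ m) :
    (Anet m r k t).ncard ≤ 2 ^ (m * t * k + t * binomLe (m - k) (r - k)) :=
  Anet_card_bound_general m r k t
end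

section
/- Let t, r, m be natural numbers with r + t ≤ m, and write γ = r/m and γ̃ = γ·(1 + t/(m-t)). Then binom(m-t, ≤ r) ≥ (1-γ̃)^t · binom(m, ≤ r). -/
/-!
Since `C(n, i) = (1 - i/(n+1)) C(n+1, i)`, every term of `binom(n+1, ≤ r)` with `i ≤ r` shrinks
by a factor of at least `1 - r/(n+1)` when one element is removed. Removing `t` elements one at a
time, each factor is at least `1 - r/(m-t)`, and `γ̃ = (r/m)(1 + t/(m-t))` is exactly `r/(m-t)`.
-/

open Finset

theorem one_sub_div_mul_choose_succ (n i : ℕ) :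
    (1 - (i : ℝ) / (n + 1)) * (n + 1).choose i = n.choose i := by
  rcases le_or_gt i (n + 1) with hi | hi
  · have key : ((n.choose i * (n + 1) : ℕ) : ℝ) = ((n + 1).choose i * (n + 1 - i) : ℕ) :=
      congrArg Nat.cast (Nat.choose_mul_succ_eq n i)
    push_cast [Nat.cast_sub hi] at key
    field_simp
    linarith
  · simp [Nat.choose_eq_zero_of_lt hi, Nat.choose_eq_zero_of_lt (by omega : n < i)]

theorem one_sub_div_mul_binomLe_succ_le (n r : ℕ) :
    (1 - (r : ℝ) / (n + 1)) * binomLe (n + 1) r ≤ binomLe n r := by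
  simp only [binomLe, Nat.cast_sum, mul_sum]
  refine sum_le_sum fun i hi => ?_
  rw [← one_sub_div_mul_choose_succ n i]
  have hir : (i : ℝ) ≤ r := by exact_mod_cast Nat.lt_succ_iff.mp (mem_range.mp hi)
  gcongr

theorem one_sub_div_pow_mul_binomLe_le {n r k : ℕ} (h : r + k ≤ n) :
    (1 - (r : ℝ) / ((n : ℝ) - k)) ^ k * binomLe n r ≤ binomLe (n - k) r := by
  induction k generalizing n with
  | zero => simp
  | succ k ih =>
    obtain ⟨n, rfl⟩ : ∃ n', n = n' + 1 := ⟨n - 1, by omega⟩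
    have hsub : ((n + 1 : ℕ) : ℝ) - (k + 1 : ℕ) = (n : ℝ) - k := by push_cast; ring
    rw [hsub, Nat.add_sub_add_right]
    have hrk : (r : ℝ) ≤ (n : ℝ) - k := by
      rw [le_sub_iff_add_le]; exact_mod_cast (by omega : r + k ≤ n)
    have hc : 0 ≤ 1 - (r : ℝ) / ((n : ℝ) - k) :=
      sub_nonneg.mpr (div_le_one_of_le₀ hrk (by linarith [r.cast_nonneg (α := ℝ)]))
    have hcn : 1 - (r : ℝ) / ((n : ℝ) - k) ≤ 1 - (r : ℝ) / (n + 1) := by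
      obtain rfl | hr := Nat.eq_zero_or_pos r
      · simp
      have : (0 : ℝ) < r := by exact_mod_cast hr
      gcongr 1 - _ / ?_
      · linarith
      · linarith [k.cast_nonneg (α := ℝ)]
    set c := 1 - (r : ℝ) / ((n : ℝ) - k)
    calc c ^ (k + 1) * binomLe (n + 1) r = c ^ k * (c * binomLe (n + 1) r) := by ring
      _ ≤ c ^ k * binomLe n r := by
        gcongr
        exact (mul_le_mul_of_nonneg_right hcn (by positivity)).trans
          (by exact_mod_cast one_sub_div_mul_binomLe_succ_le n r)
      _ ≤ binomLe (n - k) r := ih (by omega)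

/-- binom(m-t, ≤ r) ≥ (1-γ̃)^t · binom(m, ≤ r) where γ̃ =
(r/m)·(1 + t/(m-t)) (Lemma `(Simple Combinatorial Bound III)`). -/
theorem binomLe_lower_bound (t r m : ℕ) (h : r + t ≤ m) :
    (1 - ((r : ℝ) / m) * (1 + (t : ℝ) / ((m : ℝ) - t))) ^ t * (binomLe m r : ℝ) ≤
      (binomLe (m - t) r : ℝ) := by
  have hγ : (r : ℝ) / m * (1 + t / ((m : ℝ) - t)) = r / ((m : ℝ) - t) := by
    obtain rfl | hr := Nat.eq_zero_or_pos r
    · simp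
    have htm : (t : ℝ) < m := by exact_mod_cast (by omega : t < m)
    have hm : (0 : ℝ) < m := by linarith [t.cast_nonneg (α := ℝ)]
    field_simp [(sub_pos.mpr htm).ne']
    ring
  rw [hγ]
  exact one_sub_div_pow_mul_binomLe_le h
end

section
/- Let ℓ, r, m be natural numbers with ℓ ≤ r ≤ m and m ≥ 1. Then binom(m-ℓ, ≤ r-ℓ) ≤ (r/m)^ℓ · binom(m, ≤ r). -/
open Finset

/- Induction on ℓ. The identity (n+1)·C(n,i) = (i+1)·C(n+1,i+1) gives
(n+1)·binom(n, ≤k) ≤ (k+1)·binom(n+1, ≤k+1), so lowering both parameters by one costs at most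
the factor (r-ℓ)/(m-ℓ), and (r-ℓ)/(m-ℓ) ≤ r/m because r ≤ m. -/

theorem succ_mul_binomLe_le (n k : ℕ) :
    (n + 1) * binomLe n k ≤ (k + 1) * binomLe (n + 1) (k + 1) := by
  calc (n + 1) * binomLe n k
      = ∑ i ∈ range (k + 1), (i + 1) * (n + 1).choose (i + 1) := by
        rw [binomLe, mul_sum]
        exact sum_congr rfl fun i _ => by rw [Nat.add_one_mul_choose_eq, mul_comm]
    _ ≤ ∑ i ∈ range (k + 1), (k + 1) * (n + 1).choose (i + 1) :=
        sum_le_sum fun i hi => Nat.mul_le_mul_right _ (mem_range.1 hi)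
    _ = (k + 1) * ∑ i ∈ range (k + 1), (n + 1).choose (i + 1) := (mul_sum ..).symm
    _ ≤ (k + 1) * binomLe (n + 1) (k + 1) := by
        rw [binomLe, sum_range_succ' _ (k + 1)]
        exact Nat.mul_le_mul_left _ (Nat.le_add_right _ _)

theorem binomLe_le_div_mul_binomLe_succ (n k : ℕ) :
    (binomLe n k : ℝ) ≤ ((k + 1 : ℝ) / (n + 1)) * binomLe (n + 1) (k + 1) := by
  rw [div_mul_eq_mul_div, le_div_iff₀ (by positivity), mul_comm]
  exact_mod_cast succ_mul_binomLe_le n k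

theorem sub_div_sub_le_div {α : Type*} [Field α] [LinearOrder α] [IsStrictOrderedRing α]
    {x y z : α} (hz : 0 ≤ z) (hxy : x ≤ y) (hzy : z < y) :
    (x - z) / (y - z) ≤ x / y := by
  rw [div_le_div_iff₀ (sub_pos.2 hzy) (hz.trans_lt hzy)]
  nlinarith

theorem binomLe_upper_bound_general (ℓ r m : ℕ) (hℓr : ℓ ≤ r) (hrm : r ≤ m) :
    (binomLe (m - ℓ) (r - ℓ) : ℝ) ≤ ((r : ℝ) / m) ^ ℓ * (binomLe m r : ℝ) := by
  induction ℓ with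
  | zero => simp
  | succ ℓ ih =>
    have hm : m - ℓ = m - (ℓ + 1) + 1 := by omega
    have hr : r - ℓ = r - (ℓ + 1) + 1 := by omega
    have hratio : ((r - ℓ : ℕ) : ℝ) / (m - ℓ : ℕ) ≤ r / m := by
      rw [Nat.cast_sub (by omega), Nat.cast_sub (by omega)]
      exact sub_div_sub_le_div (Nat.cast_nonneg ℓ) (by exact_mod_cast hrm)
        (by exact_mod_cast (by omega : ℓ < m))
    calc (binomLe (m - (ℓ + 1)) (r - (ℓ + 1)) : ℝ)
        ≤ ((r - ℓ : ℕ) : ℝ) / (m - ℓ : ℕ) * binomLe (m - ℓ) (r - ℓ) := by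
          rw [hm, hr]; exact_mod_cast binomLe_le_div_mul_binomLe_succ _ _
      _ ≤ r / m * ((r / m) ^ ℓ * binomLe m r) := by
          gcongr
          exact ih (by omega)
      _ = (r / m) ^ (ℓ + 1) * binomLe m r := by ring

/-- binom(m-ℓ, ≤ r-ℓ) ≤ (r/m)^ℓ · binom(m, ≤ r)
(Lemma `(Simple Combinatorial Bound I)`). -/
theorem binomLe_upper_bound (ℓ r m : ℕ) (hℓr : ℓ ≤ r) (hrm : r ≤ m)
    (hm : 1 ≤ m) :
    (binomLe (m - ℓ) (r - ℓ) : ℝ) ≤ ((r : ℝ) / m) ^ ℓ * (binomLe m r : ℝ) :=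
  binomLe_upper_bound_general ℓ r m hℓr hrm
end

section
/- Let r, m, s, ℓ be natural numbers with r ≤ m, ℓ ≥ 1 and s ≥ 1, and set t = 2ℓ + s + 1. Then W_{m,r}((1-2^{-ℓ})/2) ≤ |B_t| · W_{m,r}(2^{-s+1}). -/
open Finset

/-- The net B_t: pointwise majorities, over all nonempty subsets I of t
directions, of the derivatives Δ_{Σ_{i∈I} yᵢ} f of a polynomial f of degree at
most r. -/
def Bnet (m r t : ℕ) : Set (BF m) :=
  {g | ∃ f ∈ RM m r, ∃ y : Fin t → Cube m,
    g = fun x => Maj fun I : {I : Finset (Fin t) // I.Nonempty} =>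
      DD (∑ i ∈ I.1, y i) f x}

-- ZMod 2 facts
lemma zmod2_elim : ∀ a : ZMod 2, a = 0 ∨ a = 1 := by decide
lemma zmod2_add_self : ∀ a : ZMod 2, a + a = 0 := by decide
lemma zmod2_ne_iff : ∀ a b : ZMod 2, a ≠ b ↔ a + b = 1 := by decide

lemma cube_add_self {m : ℕ} (x : Cube m) : x + x = 0 := funext fun k => zmod2_add_self _

-- single-coordinate sum
lemma sum_coord {ι α : Type*} [Fintype ι] [DecidableEq ι] [Fintype α]
    (i : ι) (h : α → ℝ) :
    ∑ y : ι → α, h (y i) =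
      (Fintype.card α : ℝ) ^ (Fintype.card ι - 1) * ∑ z : α, h z := by
  classical
  have := Equiv.sum_comp (Equiv.funSplitAt i α) (fun p : α × ({ j : ι // j ≠ i } → α) => h p.1)
  simp only [Equiv.funSplitAt_apply] at this
  rw [this, Fintype.sum_prod_type]
  have hc : Fintype.card ({ j : ι // j ≠ i } → α)
      = (Fintype.card α) ^ (Fintype.card ι - 1) := by
    rw [Fintype.card_fun]
    congr 1
    rw [Fintype.card_subtype_compl, Fintype.card_subtype_eq]
  simp only [Finset.sum_const, Finset.card_univ, nsmul_eq_mul, hc]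
  rw [Finset.mul_sum]
  push_cast
  rfl

-- two-coordinate sum
lemma sum_coord2 {ι α : Type*} [Fintype ι] [DecidableEq ι] [Fintype α]
    {i j : ι} (hij : i ≠ j) (h₁ h₂ : α → ℝ) :
    ∑ y : ι → α, h₁ (y i) * h₂ (y j) =
      (Fintype.card α : ℝ) ^ (Fintype.card ι - 2) * ((∑ z : α, h₁ z) * ∑ z : α, h₂ z) := by
  classical
  have := Equiv.sum_comp (Equiv.funSplitAt j α)
    (fun p : α × ({ k : ι // k ≠ j } → α) => h₁ (p.2 ⟨i, hij⟩) * h₂ p.1)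
  simp only [Equiv.funSplitAt_apply] at this
  rw [this, Fintype.sum_prod_type]
  have hinner : ∀ z : α, ∑ w : { k : ι // k ≠ j } → α, h₁ (w ⟨i, hij⟩) * h₂ z
      = ((Fintype.card α : ℝ) ^ (Fintype.card ι - 2) * ∑ z : α, h₁ z) * h₂ z := by
    intro z
    rw [← Finset.sum_mul, sum_coord]
    have : Fintype.card { k : ι // k ≠ j } - 1 = Fintype.card ι - 2 := by
      rw [Fintype.card_subtype_compl, Fintype.card_subtype_eq]
      omega
    rw [this]
  calc ∑ z : α, ∑ w : { k : ι // k ≠ j } → α, h₁ (w ⟨i, hij⟩) * h₂ z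
      = ∑ z : α, ((Fintype.card α : ℝ) ^ (Fintype.card ι - 2) * ∑ z : α, h₁ z) * h₂ z := by
        exact Finset.sum_congr rfl fun z _ => hinner z
    _ = _ := by rw [← Finset.mul_sum, mul_assoc]

-- the pivot involution
def phi {m t : ℕ} (I : Finset (Fin t)) (i : Fin t) (y : Fin t → Cube m) : Fin t → Cube m :=
  Function.update y i (∑ k ∈ I, y k)

lemma phi_sum {m t : ℕ} {I : Finset (Fin t)} {i : Fin t} (hi : i ∈ I) (y : Fin t → Cube m) :
    ∑ k ∈ I, phi I i y k = y i := by
  unfold phi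
  rw [Finset.sum_update_of_mem hi, Finset.sdiff_singleton_eq_erase]
  have h1 : ∑ k ∈ I, y k = y i + ∑ k ∈ I.erase i, y k := (Finset.add_sum_erase I y hi).symm
  rw [h1, add_assoc, cube_add_self, add_zero]

lemma phi_invol {m t : ℕ} {I : Finset (Fin t)} {i : Fin t} (hi : i ∈ I) :
    Function.Involutive (phi (m := m) I i) := by
  intro y
  have h := phi_sum hi y
  unfold phi at *
  rw [h, Function.update_idem, Function.update_eq_self]

lemma phi_apply_ne {m t : ℕ} {I : Finset (Fin t)} {i k : Fin t} (hk : k ≠ i)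
    (y : Fin t → Cube m) : phi I i y k = y k := Function.update_of_ne hk _ _

lemma phi_sumJ {m t : ℕ} {I J : Finset (Fin t)} {i : Fin t} (hiJ : i ∉ J)
    (y : Fin t → Cube m) : ∑ k ∈ J, phi I i y k = ∑ k ∈ J, y k :=
  Finset.sum_congr rfl fun k hk => phi_apply_ne (by rintro rfl; exact hiJ hk) y

-- L1
lemma sum_subsetsum {m t : ℕ} {I : Finset (Fin t)} (hI : I.Nonempty) (h : Cube m → ℝ) :
    ∑ y : Fin t → Cube m, h (∑ k ∈ I, y k) = ((2:ℝ) ^ m) ^ (t - 1) * ∑ z : Cube m, h z := by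
  classical
  obtain ⟨i, hi⟩ := hI
  have hre := Equiv.sum_comp ((phi_invol (m := m) hi).toPerm _)
    (fun y : Fin t → Cube m => h (∑ k ∈ I, y k))
  simp only [Function.Involutive.coe_toPerm] at hre
  have hre2 : ∀ y : Fin t → Cube m, h (∑ k ∈ I, phi I i y k) = h (y i) := fun y => by
    rw [phi_sum hi]
  calc ∑ y : Fin t → Cube m, h (∑ k ∈ I, y k)
      = ∑ y : Fin t → Cube m, h (∑ k ∈ I, phi I i y k) := hre.symm
    _ = ∑ y : Fin t → Cube m, h (y i) := Finset.sum_congr rfl fun y _ => hre2 y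
    _ = _ := by
        rw [sum_coord]
        norm_num [Fintype.card_fun]


-- L2, directed case: some i ∈ I \ J
lemma sum_subsetsum2_aux {m t : ℕ} {I J : Finset (Fin t)} (hJ : J.Nonempty)
    {i : Fin t} (hiI : i ∈ I) (hiJ : i ∉ J) (h₁ h₂ : Cube m → ℝ) :
    ∑ y : Fin t → Cube m, h₁ (∑ k ∈ I, y k) * h₂ (∑ k ∈ J, y k) =
      ((2:ℝ) ^ m) ^ (t - 2) * ((∑ z : Cube m, h₁ z) * ∑ z : Cube m, h₂ z) := by
  classical
  obtain ⟨j, hj⟩ := hJ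
  have hij : i ≠ j := fun h => hiJ (h ▸ hj)
  have step1 : ∑ y : Fin t → Cube m, h₁ (∑ k ∈ I, y k) * h₂ (∑ k ∈ J, y k)
      = ∑ y : Fin t → Cube m, h₁ (y i) * h₂ (∑ k ∈ J, y k) := by
    have hre := Equiv.sum_comp ((phi_invol (m := m) hiI).toPerm _)
      (fun y : Fin t → Cube m => h₁ (∑ k ∈ I, y k) * h₂ (∑ k ∈ J, y k))
    simp only [Function.Involutive.coe_toPerm] at hre
    rw [← hre]
    exact Finset.sum_congr rfl fun y _ => by rw [phi_sum hiI, phi_sumJ hiJ]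
  have step2 : ∑ y : Fin t → Cube m, h₁ (y i) * h₂ (∑ k ∈ J, y k)
      = ∑ y : Fin t → Cube m, h₁ (y i) * h₂ (y j) := by
    have hre := Equiv.sum_comp ((phi_invol (m := m) hj).toPerm _)
      (fun y : Fin t → Cube m => h₁ (y i) * h₂ (∑ k ∈ J, y k))
    simp only [Function.Involutive.coe_toPerm] at hre
    rw [← hre]
    refine Finset.sum_congr rfl fun y _ => ?_
    rw [phi_sum hj, phi_apply_ne hij]
  rw [step1, step2, sum_coord2 hij]
  norm_num [Fintype.card_fun]

lemma sum_subsetsum2 {m t : ℕ} {I J : Finset (Fin t)} (hI : I.Nonempty) (hJ : J.Nonempty)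
    (hne : I ≠ J) (h₁ h₂ : Cube m → ℝ) :
    ∑ y : Fin t → Cube m, h₁ (∑ k ∈ I, y k) * h₂ (∑ k ∈ J, y k) =
      ((2:ℝ) ^ m) ^ (t - 2) * ((∑ z : Cube m, h₁ z) * ∑ z : Cube m, h₂ z) := by
  classical
  by_cases hd : (I \ J).Nonempty
  · obtain ⟨i, hi⟩ := hd
    rw [Finset.mem_sdiff] at hi
    exact sum_subsetsum2_aux hJ hi.1 hi.2 h₁ h₂
  · have hIJ : I ⊆ J := by
      rw [Finset.not_nonempty_iff_eq_empty, Finset.sdiff_eq_empty_iff_subset] at hd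
      exact hd
    have hd2 : (J \ I).Nonempty := by
      rw [Finset.sdiff_nonempty]
      exact fun hJI => hne (Finset.Subset.antisymm hIJ hJI)
    obtain ⟨j, hj⟩ := hd2
    rw [Finset.mem_sdiff] at hj
    have := sum_subsetsum2_aux hI hj.1 hj.2 h₂ h₁
    calc ∑ y : Fin t → Cube m, h₁ (∑ k ∈ I, y k) * h₂ (∑ k ∈ J, y k)
        = ∑ y : Fin t → Cube m, h₂ (∑ k ∈ J, y k) * h₁ (∑ k ∈ I, y k) := by
          exact Finset.sum_congr rfl fun y _ => mul_comm _ _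
      _ = _ := by rw [this]; ring

lemma card_nonemptyFinset (t : ℕ) :
    Fintype.card {I : Finset (Fin t) // I.Nonempty} = 2 ^ t - 1 := by
  classical
  have : Fintype.card {I : Finset (Fin t) // I.Nonempty}
      = Fintype.card {I : Finset (Fin t) // ¬ I = ∅} := by
    apply Fintype.card_congr
    exact Equiv.subtypeEquivRight fun I => by simp [Finset.nonempty_iff_ne_empty]
  rw [this, Fintype.card_subtype_compl, Fintype.card_subtype_eq, Fintype.card_finset,
    Fintype.card_fin]


lemma sum_indicator_shift {m : ℕ} (f : BF m) (x : Cube m) :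
    ∑ z : Cube m, (if f (x + z) = 1 then (1:ℝ) else 0) = wt f * 2 ^ m := by
  classical
  have hre := Equiv.sum_comp (Equiv.addLeft x) (fun w : Cube m => if f w = 1 then (1:ℝ) else 0)
  have hL : ∑ z : Cube m, (if f (x + z) = 1 then (1:ℝ) else 0)
      = ∑ w : Cube m, (if f w = 1 then (1:ℝ) else 0) := by
    rw [← hre]
    rfl
  rw [hL, Finset.sum_boole]
  rw [wt]
  field_simp


lemma maj_bad_iff {m t : ℕ} (ht : 1 ≤ t) (f : BF m) (y : Fin t → Cube m) (x : Cube m) :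
    (Maj fun I : {I : Finset (Fin t) // I.Nonempty} =>
        (fun x => f (x + (∑ i ∈ I.1, y i)) + f x) x) ≠ f x ↔
      2 ^ t ≤ 2 * (univ.filter fun I : {I : Finset (Fin t) // I.Nonempty} =>
        f (x + ∑ i ∈ I.1, y i) = 1).card := by
  classical
  set M := (univ.filter fun I : {I : Finset (Fin t) // I.Nonempty} =>
    f (x + ∑ i ∈ I.1, y i) = 1).card with hM
  have hcard : Fintype.card {I : Finset (Fin t) // I.Nonempty} = 2 ^ t - 1 :=
    card_nonemptyFinset t
  have h2 : 2 ^ t = 2 ^ (t - 1) * 2 := by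
    rw [← pow_succ]
    congr 1
    omega
  obtain ⟨k, hk, hk1⟩ : ∃ k, 2 ^ t = 2 * k ∧ 1 ≤ k :=
    ⟨2 ^ (t - 1), by rw [h2]; ring, Nat.one_le_two_pow⟩
  have hMle : M ≤ 2 ^ t - 1 := by
    rw [hM, ← hcard, ← Finset.card_univ]
    exact Finset.card_filter_le _ _
  rcases zmod2_elim (f x) with hfx | hfx
  · have hv : (Finset.univ.filter fun I : {I : Finset (Fin t) // I.Nonempty} =>
        (fun x => f (x + (∑ i ∈ I.1, y i)) + f x) x = 1).card = M := by
      rw [hM]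
      congr 1
      apply Finset.filter_congr
      intro I _
      simp only [hfx, add_zero]
    rw [hfx, Maj, hv, hcard]
    split_ifs with hcond
    · rw [hk] at hcond hMle ⊢
      simpa using (by omega : 2 * k ≤ 2 * M)
    · rw [hk] at hcond hMle ⊢
      simpa using (by omega : ¬ 2 * k ≤ 2 * M)
  · have hv : (Finset.univ.filter fun I : {I : Finset (Fin t) // I.Nonempty} =>
        (fun x => f (x + (∑ i ∈ I.1, y i)) + f x) x = 1).card = 2 ^ t - 1 - M := by
      have : (Finset.univ.filter fun I : {I : Finset (Fin t) // I.Nonempty} =>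
          (fun x => f (x + (∑ i ∈ I.1, y i)) + f x) x = 1)
          = (Finset.univ.filter fun I : {I : Finset (Fin t) // I.Nonempty} =>
            ¬ (f (x + ∑ i ∈ I.1, y i) = 1)) := by
        apply Finset.filter_congr
        intro I _
        rcases zmod2_elim (f (x + ∑ i ∈ I.1, y i)) with h | h <;> simp [h, hfx]
      rw [this, Finset.filter_not, Finset.card_sdiff_of_subset (Finset.filter_subset _ _),
        Finset.card_univ, hcard, hM]
    rw [hfx, Maj, hv, hcard]
    split_ifs with hcond
    · rw [hk] at hcond hMle ⊢
      simpa using (by omega : ¬ 2 * k ≤ 2 * M)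
    · rw [hk] at hcond hMle ⊢
      simpa using (by omega : 2 * k ≤ 2 * M)

lemma badcard_le {m ℓ s t : ℕ} (hℓ : 1 ≤ ℓ) (ht : t = 2*ℓ+s+1) (f : BF m)
    (hwt : wt f ≤ (1 - (2:ℝ)^(-(ℓ:ℤ)))/2) (x : Cube m) :
    ((univ.filter fun y : Fin t → Cube m =>
        2 ^ t ≤ 2 * (univ.filter fun I : {I : Finset (Fin t) // I.Nonempty} =>
          f (x + ∑ i ∈ I.1, y i) = 1).card).card : ℝ)
      ≤ 2 ^ (-(s:ℤ)) * ((2:ℝ) ^ m) ^ t := by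
  classical
  set μ := wt f with hμ
  set ε : ℝ := (2:ℝ)^(-(ℓ:ℤ)) with hε
  set N : ℝ := ((2:ℝ) ^ m) ^ t with hN
  have hμ0 : 0 ≤ μ := by
    rw [hμ, wt]
    positivity
  have hε0 : 0 < ε := by rw [hε]; positivity
  have hN0 : 0 < N := by rw [hN]; positivity
  set ι := {I : Finset (Fin t) // I.Nonempty} with hι
  set n : ℕ := 2 ^ t - 1 with hn
  have hcardι : Fintype.card ι = n := card_nonemptyFinset t
  have hn1 : 1 ≤ n := by
    have : 2 ≤ 2 ^ t := by
      calc 2 = 2^1 := rfl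
      _ ≤ 2^t := Nat.pow_le_pow_right (by norm_num) (by omega)
    omega
  set X : ι → (Fin t → Cube m) → ℝ :=
    fun I y => if f (x + ∑ i ∈ I.1, y i) = 1 then 1 else 0 with hX
  have hpowmt : ∀ u : ℕ, u ≤ t → ((2:ℝ)^m)^(t-u) * ((2:ℝ)^m)^u = N := by
    intro u hu
    rw [hN, ← pow_add]
    congr 1
    omega
  have hXsum : ∀ I : ι, ∑ y : Fin t → Cube m, X I y = μ * N := by
    intro I
    rw [hX]
    have := sum_subsetsum (m := m) I.2 (fun z => if f (x + z) = 1 then (1:ℝ) else 0)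
    simp only at this ⊢
    rw [this, sum_indicator_shift, ← hμ]
    have h2 : ((2:ℝ)^m)^(t-1) * ((2:ℝ)^m)^1 = N := hpowmt 1 (by omega)
    rw [pow_one] at h2
    rw [← mul_assoc, mul_comm (((2:ℝ)^m)^(t-1)) μ, mul_assoc, h2]
  have hXXsum : ∀ I J : ι, I ≠ J → ∑ y : Fin t → Cube m, X I y * X J y = μ * μ * N := by
    intro I J hIJ
    rw [hX]
    have hIJ' : I.1 ≠ J.1 := fun h => hIJ (Subtype.ext h)
    have := sum_subsetsum2 (m := m) I.2 J.2 hIJ'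
      (fun z => if f (x + z) = 1 then (1:ℝ) else 0)
      (fun z => if f (x + z) = 1 then (1:ℝ) else 0)
    simp only at this ⊢
    rw [this, sum_indicator_shift, ← hμ]
    have h2 : ((2:ℝ)^m)^(t-2) * ((2:ℝ)^m)^2 = N := hpowmt 2 (by omega)
    rw [← h2]
    ring
  set Mr : (Fin t → Cube m) → ℝ := fun y => ∑ I : ι, X I y with hMr
  have hMcard : ∀ y : Fin t → Cube m,
      ((univ.filter fun I : ι => f (x + ∑ i ∈ I.1, y i) = 1).card : ℝ) = Mr y := by
    intro y
    rw [hMr, hX]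
    simp only
    rw [Finset.sum_boole]
  -- variance bound
  have hdiag : ∀ I : ι, ∑ y : Fin t → Cube m, (X I y - μ) * (X I y - μ) ≤ N / 4 := by
    intro I
    have hsq : ∀ y, X I y * X I y = X I y := by
      intro y
      rw [hX]
      simp only
      split_ifs <;> norm_num
    have : ∑ y : Fin t → Cube m, (X I y - μ) * (X I y - μ)
        = μ * N - 2 * μ * (μ * N) + μ * μ * N := by
      have e1 : ∀ y : Fin t → Cube m, (X I y - μ) * (X I y - μ)
          = X I y - 2 * μ * X I y + μ * μ := by
        intro y
        have := hsq y
        nlinarith [hsq y]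
      rw [Finset.sum_congr rfl fun y _ => e1 y]
      rw [Finset.sum_add_distrib, Finset.sum_sub_distrib, ← Finset.mul_sum, hXsum I,
        Finset.sum_const, Finset.card_univ]
      have hcardY : (Fintype.card (Fin t → Cube m) : ℝ) = N := by
        rw [hN]
        rw [Fintype.card_fun]
        push_cast
        simp [Fintype.card_fun]
      rw [nsmul_eq_mul, hcardY]
      ring
    rw [this]
    nlinarith [hN0.le, sq_nonneg (μ - 1/2), sq_nonneg μ]
  have hoff : ∀ I J : ι, I ≠ J → ∑ y : Fin t → Cube m, (X I y - μ) * (X J y - μ) = 0 := by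
    intro I J hIJ
    have e1 : ∀ y : Fin t → Cube m, (X I y - μ) * (X J y - μ)
        = X I y * X J y - μ * X I y - μ * X J y + μ * μ := by
      intro y; ring
    rw [Finset.sum_congr rfl fun y _ => e1 y]
    rw [Finset.sum_add_distrib, Finset.sum_sub_distrib, Finset.sum_sub_distrib,
      ← Finset.mul_sum, ← Finset.mul_sum, hXsum I, hXsum J, hXXsum I J hIJ,
      Finset.sum_const, Finset.card_univ]
    have hcardY : (Fintype.card (Fin t → Cube m) : ℝ) = N := by
      rw [hN, Fintype.card_fun]
      push_cast
      simp [Fintype.card_fun]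
    rw [nsmul_eq_mul, hcardY]
    ring
  have hvar : ∑ y : Fin t → Cube m, (Mr y - (n:ℝ) * μ)^2 ≤ (n:ℝ) * N / 4 := by
    have hexp : ∀ y : Fin t → Cube m, (Mr y - (n:ℝ) * μ)^2
        = ∑ I : ι, ∑ J : ι, (X I y - μ) * (X J y - μ) := by
      intro y
      have : Mr y - (n:ℝ) * μ = ∑ I : ι, (X I y - μ) := by
        rw [Finset.sum_sub_distrib, hMr, Finset.sum_const, Finset.card_univ, hcardι,
          nsmul_eq_mul]
      rw [this, sq, Finset.sum_mul_sum]
    rw [Finset.sum_congr rfl fun y _ => hexp y]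
    rw [Finset.sum_comm]
    have hswap : ∀ I : ι, ∑ y : Fin t → Cube m, ∑ J : ι, (X I y - μ) * (X J y - μ)
        = ∑ J : ι, ∑ y : Fin t → Cube m, (X I y - μ) * (X J y - μ) :=
      fun I => Finset.sum_comm
    rw [Finset.sum_congr rfl fun I _ => hswap I]
    have hinner : ∀ I : ι, ∑ J : ι, ∑ y : Fin t → Cube m, (X I y - μ) * (X J y - μ)
        ≤ N / 4 := by
      intro I
      have : ∑ J : ι, ∑ y : Fin t → Cube m, (X I y - μ) * (X J y - μ)
          = ∑ y : Fin t → Cube m, (X I y - μ) * (X I y - μ) := by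
        apply Finset.sum_eq_single_of_mem I (Finset.mem_univ I)
        intro J _ hJI
        exact hoff I J (fun h => hJI (h.symm))
      rw [this]
      exact hdiag I
    calc ∑ I : ι, ∑ J : ι, ∑ y : Fin t → Cube m, (X I y - μ) * (X J y - μ)
        ≤ ∑ _I : ι, N / 4 := Finset.sum_le_sum fun I _ => hinner I
      _ = (n:ℝ) * N / 4 := by
          rw [Finset.sum_const, Finset.card_univ, hcardι, nsmul_eq_mul]
          ring
  -- each bad y has large deviation
  set Bad := (univ.filter fun y : Fin t → Cube m =>
      2 ^ t ≤ 2 * (univ.filter fun I : ι =>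
        f (x + ∑ i ∈ I.1, y i) = 1).card) with hBad
  have hdev : ∀ y ∈ Bad, ((n:ℝ) * ε / 2)^2 ≤ (Mr y - (n:ℝ) * μ)^2 := by
    intro y hy
    rw [hBad, Finset.mem_filter] at hy
    have hy2 : (2:ℝ)^t ≤ 2 * Mr y := by
      rw [← hMcard y]
      have := hy.2
      exact_mod_cast (by exact_mod_cast this : ((2^t : ℕ):ℝ) ≤ ((2 * _ : ℕ):ℝ))
    have hnle : (n:ℝ) ≤ (2:ℝ)^t := by
      have h1 : (n:ℝ) ≤ ((2^t : ℕ):ℝ) := by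
        exact_mod_cast (hn ▸ Nat.sub_le (2^t) 1)
      push_cast at h1
      exact h1
    have hμle : μ ≤ (1 - ε)/2 := hwt
    have hn0' : (0:ℝ) ≤ (n:ℝ) := Nat.cast_nonneg n
    have hkey : (n:ℝ) * ε / 2 ≤ Mr y - (n:ℝ) * μ := by
      nlinarith [hε0.le, mul_le_mul_of_nonneg_left hμle hn0']
    have h0 : (0:ℝ) ≤ (n:ℝ) * ε / 2 := by positivity
    exact pow_le_pow_left₀ h0 hkey 2
  have hcount : (Bad.card : ℝ) * ((n:ℝ) * ε / 2)^2 ≤ (n:ℝ) * N / 4 := by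
    calc (Bad.card : ℝ) * ((n:ℝ) * ε / 2)^2
        = ∑ _y ∈ Bad, ((n:ℝ) * ε / 2)^2 := by rw [Finset.sum_const, nsmul_eq_mul]
      _ ≤ ∑ y ∈ Bad, (Mr y - (n:ℝ) * μ)^2 := Finset.sum_le_sum hdev
      _ ≤ ∑ y : Fin t → Cube m, (Mr y - (n:ℝ) * μ)^2 :=
          Finset.sum_le_sum_of_subset_of_nonneg (Finset.subset_univ _)
            (fun y _ _ => sq_nonneg _)
      _ ≤ (n:ℝ) * N / 4 := hvar
  -- conclude
  have hne : (0:ℝ) < (n:ℝ) := by exact_mod_cast hn1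
  have hBadle : (Bad.card : ℝ) ≤ N / ((n:ℝ) * ε^2) := by
    rw [le_div_iff₀ (by positivity : (0:ℝ) < (n:ℝ) * ε^2)]
    nlinarith [hcount, hne, Nat.cast_nonneg (α := ℝ) Bad.card, hε0, sq_nonneg ε]
  have hfinal : N / ((n:ℝ) * ε^2) ≤ 2 ^ (-(s:ℤ)) * N := by
    have hnge : (2:ℝ)^(2*ℓ+s) ≤ (n:ℝ) := by
      have hnat : 2^(2*ℓ+s) ≤ n := by
        rw [hn, ht, pow_succ]
        have := Nat.one_le_two_pow (n := 2*ℓ+s)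
        omega
      calc (2:ℝ)^(2*ℓ+s) = ((2^(2*ℓ+s) : ℕ) : ℝ) := by push_cast; ring
        _ ≤ (n:ℝ) := Nat.cast_le.mpr hnat
    have hεsq : ε^2 = (2:ℝ)^(-(2*(ℓ:ℤ))) := by
      rw [hε, ← zpow_natCast ((2:ℝ)^(-(ℓ:ℤ))) 2, ← zpow_mul]
      congr 1
      push_cast
      ring
    have hs2 : (2:ℝ)^(s:ℕ) ≤ (n:ℝ) * ε^2 := by
      rw [hεsq]
      have h1 : (2:ℝ)^(2*ℓ+s) * (2:ℝ)^(-(2*(ℓ:ℤ))) = (2:ℝ)^(s:ℕ) := by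
        rw [← zpow_natCast (2:ℝ) (2*ℓ+s), ← zpow_add₀ (by norm_num : (2:ℝ) ≠ 0),
          ← zpow_natCast (2:ℝ) s]
        congr 1
        push_cast
        ring
      calc (2:ℝ)^(s:ℕ) = (2:ℝ)^(2*ℓ+s) * (2:ℝ)^(-(2*(ℓ:ℤ))) := h1.symm
        _ ≤ (n:ℝ) * (2:ℝ)^(-(2*(ℓ:ℤ))) := by
            apply mul_le_mul_of_nonneg_right hnge
            positivity
    calc N / ((n:ℝ) * ε^2) ≤ N / (2:ℝ)^(s:ℕ) := by
          apply div_le_div_of_nonneg_left hN0.le (by positivity) hs2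
      _ = 2 ^ (-(s:ℤ)) * N := by
          rw [zpow_neg, zpow_natCast, div_eq_mul_inv, mul_comm]
  exact le_trans hBadle hfinal

lemma RM_add {m r : ℕ} {f g : BF m} (hf : f ∈ RM m r) (hg : g ∈ RM m r) :
    f + g ∈ RM m r := by
  obtain ⟨p, hp, hpe⟩ := hf
  obtain ⟨q, hq, hqe⟩ := hg
  refine ⟨p + q, le_trans (MvPolynomial.totalDegree_add p q) (by omega : max p.totalDegree q.totalDegree ≤ r), fun x => ?_⟩
  rw [map_add, hpe, hqe]
  rfl

lemma approx {m r ℓ s t : ℕ} (hℓ : 1 ≤ ℓ) (ht : t = 2*ℓ+s+1) {f : BF m} (hf : f ∈ RM m r)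
    (hwt : wt f ≤ (1 - (2:ℝ)^(-(ℓ:ℤ)))/2) :
    ∃ g ∈ Bnet m r t, ((univ.filter fun x => g x ≠ f x).card : ℝ) ≤ 2^(-(s:ℤ)) * 2^m := by
  classical
  set F : (Fin t → Cube m) → BF m := fun y x =>
    Maj fun I : {I : Finset (Fin t) // I.Nonempty} => DD (∑ i ∈ I.1, y i) f x with hF
  have hbad : ∀ (y : Fin t → Cube m) (x : Cube m), (F y x ≠ f x) ↔
      2^t ≤ 2 * (univ.filter fun I : {I : Finset (Fin t) // I.Nonempty} =>
        f (x + ∑ i ∈ I.1, y i) = 1).card := by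
    intro y x
    exact maj_bad_iff (by omega) f y x
  have hcardY : (Fintype.card (Fin t → Cube m) : ℝ) = ((2:ℝ)^m)^t := by
    rw [Fintype.card_fun]
    push_cast
    simp [Fintype.card_fun]
  have hsum : ∑ y : Fin t → Cube m, ((univ.filter fun x => F y x ≠ f x).card : ℝ)
      ≤ ∑ _y : Fin t → Cube m, (2:ℝ)^(-(s:ℤ)) * 2^m := by
    have hswap : ∑ y : Fin t → Cube m, ((univ.filter fun x => F y x ≠ f x).card : ℝ)
        = ∑ x : Cube m, ((univ.filter fun y : Fin t → Cube m => F y x ≠ f x).card : ℝ) := by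
      have e1 : ∀ y : Fin t → Cube m, ((univ.filter fun x => F y x ≠ f x).card : ℝ)
          = ∑ x : Cube m, if F y x ≠ f x then (1:ℝ) else 0 := by
        intro y
        rw [Finset.sum_boole]
      have e2 : ∀ x : Cube m, ((univ.filter fun y : Fin t → Cube m => F y x ≠ f x).card : ℝ)
          = ∑ y : Fin t → Cube m, if F y x ≠ f x then (1:ℝ) else 0 := by
        intro x
        rw [Finset.sum_boole]
      rw [Finset.sum_congr rfl fun y _ => e1 y, Finset.sum_comm,
        Finset.sum_congr rfl fun x _ => (e2 x).symm]
    rw [hswap]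
    have hperx : ∀ x : Cube m,
        ((univ.filter fun y : Fin t → Cube m => F y x ≠ f x).card : ℝ)
          ≤ 2 ^ (-(s:ℤ)) * ((2:ℝ) ^ m) ^ t := by
      intro x
      have hfe : (univ.filter fun y : Fin t → Cube m => F y x ≠ f x)
          = (univ.filter fun y : Fin t → Cube m =>
            2^t ≤ 2 * (univ.filter fun I : {I : Finset (Fin t) // I.Nonempty} =>
              f (x + ∑ i ∈ I.1, y i) = 1).card) := by
        apply Finset.filter_congr
        intro y _
        simp only [hbad y x]
      rw [hfe]
      exact badcard_le hℓ ht f hwt x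
    calc ∑ x : Cube m, ((univ.filter fun y : Fin t → Cube m => F y x ≠ f x).card : ℝ)
        ≤ ∑ _x : Cube m, 2 ^ (-(s:ℤ)) * ((2:ℝ) ^ m) ^ t :=
          Finset.sum_le_sum fun x _ => hperx x
      _ = ∑ _y : Fin t → Cube m, (2:ℝ)^(-(s:ℤ)) * 2^m := by
          rw [Finset.sum_const, Finset.sum_const, Finset.card_univ, Finset.card_univ,
            nsmul_eq_mul, nsmul_eq_mul, hcardY]
          have : (Fintype.card (Cube m) : ℝ) = (2:ℝ)^m := by
            push_cast
            simp [Fintype.card_fun]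
          rw [this]
          ring
  obtain ⟨y, _, hy⟩ := Finset.exists_le_of_sum_le
    (Finset.univ_nonempty (α := Fin t → Cube m)) hsum
  exact ⟨F y, ⟨f, hf, y, rfl⟩, hy⟩

theorem bias_via_net' (m r s ℓ : ℕ) (hrm : r ≤ m) (hℓ : 1 ≤ ℓ) (hs : 1 ≤ s) :
    W m r ((1 - (2 : ℝ) ^ (-(ℓ : ℤ))) / 2) ≤
      (Bnet m r (2 * ℓ + s + 1)).ncard * W m r ((2 : ℝ) ^ (1 - (s : ℤ))) := by
  classical
  set t := 2 * ℓ + s + 1 with htdef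
  set S := {f : BF m | f ∈ RM m r ∧ wt f ≤ (1 - (2:ℝ)^(-(ℓ:ℤ)))/2} with hS
  set T := {f : BF m | f ∈ RM m r ∧ wt f ≤ (2:ℝ)^(1 - (s:ℤ))} with hT
  have happrox : ∀ f ∈ S, ∃ g ∈ Bnet m r t,
      ((univ.filter fun x => g x ≠ f x).card : ℝ) ≤ 2^(-(s:ℤ)) * 2^m := by
    intro f hf
    exact approx hℓ htdef hf.1 hf.2
  choose! G hG1 hG2 using happrox
  set pick : BF m → BF m := fun g => if h : ∃ f ∈ S, G f = g then h.choose else 0 with hpick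
  set Φ : BF m → BF m × BF m := fun f => (G f, f + pick (G f)) with hΦ
  have hinj : Set.InjOn Φ S := by
    intro f₁ _ f₂ _ heq
    rw [hΦ] at heq
    simp only [Prod.mk.injEq] at heq
    obtain ⟨e1, e2⟩ := heq
    rw [e1] at e2
    exact add_right_cancel e2
  have hmaps : ∀ f ∈ S, Φ f ∈ (Bnet m r t) ×ˢ T := by
    intro f hf
    rw [hΦ, Set.mem_prod]
    refine ⟨hG1 f hf, ?_⟩
    have hex : ∃ f' ∈ S, G f' = G f := ⟨f, hf, rfl⟩
    have hpickeq : pick (G f) = hex.choose := by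
      rw [hpick]
      simp only [dif_pos hex]
    obtain ⟨hmem, hGeq⟩ := hex.choose_spec
    set f' := hex.choose with hf'
    show f + pick (G f) ∈ T
    rw [hpickeq]
    constructor
    · exact RM_add hf.1 hmem.1
    · -- weight bound
      have hsub : (univ.filter fun x => (f + f') x = 1) ⊆
          (univ.filter fun x => G f x ≠ f x) ∪ (univ.filter fun x => G f' x ≠ f' x) := by
        intro x hx
        rw [Finset.mem_filter] at hx
        rw [Finset.mem_union, Finset.mem_filter, Finset.mem_filter]
        have hne : f x ≠ f' x := by
          rw [zmod2_ne_iff]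
          exact hx.2
        by_contra hcon
        push_neg at hcon
        obtain ⟨h1, h2⟩ := hcon
        rw [hGeq] at *
        exact hne (((h1 (Finset.mem_univ x)).symm).trans (h2 (Finset.mem_univ x)))
      have hcard : ((univ.filter fun x => (f + f') x = 1).card : ℝ)
          ≤ 2^(-(s:ℤ)) * 2^m + 2^(-(s:ℤ)) * 2^m := by
        calc ((univ.filter fun x => (f + f') x = 1).card : ℝ)
            ≤ (((univ.filter fun x => G f x ≠ f x) ∪
                (univ.filter fun x => G f' x ≠ f' x)).card : ℝ) := by
              exact_mod_cast Nat.cast_le.mpr (Finset.card_le_card hsub)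
          _ ≤ (((univ.filter fun x => G f x ≠ f x).card : ℝ)
              + ((univ.filter fun x => G f' x ≠ f' x).card : ℝ)) := by
              exact_mod_cast Nat.cast_le.mpr (Finset.card_union_le _ _)
          _ ≤ 2^(-(s:ℤ)) * 2^m + 2^(-(s:ℤ)) * 2^m :=
              add_le_add (hG2 f hf) (hG2 f' hmem)
      rw [wt]
      rw [div_le_iff₀ (by positivity : (0:ℝ) < 2^m)]
      have hzpow : (2:ℝ)^(1 - (s:ℤ)) = 2 * (2:ℝ)^(-(s:ℤ)) := by
        rw [zpow_sub₀ (by norm_num : (2:ℝ) ≠ 0)]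
        rw [zpow_one]
        rw [zpow_neg]
        ring
      rw [hzpow]
      calc ((univ.filter fun x => (f + f') x = 1).card : ℝ)
          ≤ 2^(-(s:ℤ)) * 2^m + 2^(-(s:ℤ)) * 2^m := hcard
        _ = 2 * (2:ℝ)^(-(s:ℤ)) * 2^m := by ring
  have hle := Set.ncard_le_ncard_of_injOn Φ hmaps hinj (Set.toFinite _)
  have hprod : ((Bnet m r t) ×ˢ T).ncard = (Bnet m r t).ncard * T.ncard := by
    rw [← Nat.card_coe_set_eq, ← Nat.card_coe_set_eq, ← Nat.card_coe_set_eq,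
      Nat.card_congr (Equiv.Set.prod _ _), Nat.card_prod]
  rw [hprod] at hle
  exact hle

/-- W_{m,r}((1-2^{-ℓ})/2) ≤ |B_{2ℓ+s+1}| · W_{m,r}(2^{-s+1})
(Corollary `cor:bias-via-net`). -/
theorem bias_via_net (m r s ℓ : ℕ) (hrm : r ≤ m) (hℓ : 1 ≤ ℓ) (hs : 1 ≤ s) :
    W m r ((1 - (2 : ℝ) ^ (-(ℓ : ℤ))) / 2) ≤
      (Bnet m r (2 * ℓ + s + 1)).ncard * W m r ((2 : ℝ) ^ (1 - (s : ℤ))) := by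
  exact bias_via_net' m r s ℓ hrm hℓ hs
end

section
/- Let r ≤ m be natural numbers, let f ∈ P(m,r) be nonzero with b = |supp(f)| nonzero evaluations, let F ∈ F₂^{F₂^m} denote the evaluation vector of f, and let w be a natural number with w ≤ 2^m. Consider the set of pairs (v, v') of vectors in F₂^{F₂^m} such that v + v' = F and |v'| ≤ |v| = w (Hamming weights). If 2w < b this set is empty; and if 2w ≥ b, its size is at most 2^b · binom(2^m - b, ≤ ⌊w - b/2⌋). -/
open Finset

/-! A pair `(v, v')` with `v + v' = f` is determined by `v`, as `v' = v + f`. Coordinatewise,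
`|v| + |v + f| = |f| + 2 |supp v \ supp f|`, so `|v + f| ≤ |v| = w` forces
`2 |supp v \ supp f| ≤ 2w - b` (and is impossible when `2w < b`). A support `S` splits into
`S ∩ supp f`, one of `2^b` sets, and `S \ supp f`, a set of size at most `⌊w - b/2⌋` in the
complement of `supp f`, which has `2^m - b` elements. -/

theorem card_filter_powerset_card_le {α : Type*} [DecidableEq α] (s : Finset α) (k : ℕ) :
    #{A ∈ s.powerset | #A ≤ k} = binomLe #s k := by
  have hsplit : {A ∈ s.powerset | #A ≤ k} = (range (k + 1)).biUnion (s.powersetCard ·) := by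
    ext A
    simp only [mem_filter, mem_powerset, mem_biUnion, mem_range, mem_powersetCard,
      Nat.lt_succ_iff]
    exact ⟨fun ⟨hA, hk⟩ => ⟨#A, hk, hA, rfl⟩, fun ⟨_, hk, hA, hcard⟩ => ⟨hA, hcard ▸ hk⟩⟩
  rw [hsplit, card_biUnion fun i _ j _ hij => s.pairwise_disjoint_powersetCard hij]
  exact sum_congr rfl fun i _ => card_powersetCard i s

theorem card_filter_card_sdiff_le {α : Type*} [Fintype α] [DecidableEq α] (T : Finset α)
    (k : ℕ) : #{S : Finset α | #(S \ T) ≤ k} = 2 ^ #T * binomLe #Tᶜ k := by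
  rw [← card_powerset, ← card_filter_powerset_card_le, ← card_product]
  have hsplit {A B : Finset α} (hA : A ⊆ T) (hB : Disjoint B T) :
      (A ∪ B) ∩ T = A ∧ (A ∪ B) \ T = B := by
    rw [union_inter_distrib_right, inter_eq_left.mpr hA, disjoint_iff_inter_eq_empty.mp hB,
      union_empty, union_sdiff_distrib, sdiff_eq_empty_iff_subset.mpr hA, empty_union,
      sdiff_eq_self_of_disjoint hB]
    exact ⟨rfl, rfl⟩
  refine card_bij' (fun S _ => (S ∩ T, S \ T)) (fun p _ => p.1 ∪ p.2) ?_ ?_ ?_ ?_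
  · intro S hS
    simp only [mem_filter, mem_univ, true_and] at hS
    simp only [mem_product, mem_powerset, mem_filter, subset_compl_iff_disjoint_right]
    exact ⟨inter_subset_right, disjoint_sdiff_self_left, hS⟩
  · rintro ⟨A, B⟩ h
    simp only [mem_product, mem_powerset, mem_filter, subset_compl_iff_disjoint_right] at h
    obtain ⟨hA, hB, hk⟩ := h
    simpa only [mem_filter, mem_univ, true_and, (hsplit hA hB).2] using hk
  · intro S _
    rw [union_comm, sdiff_union_inter]
  · rintro ⟨A, B⟩ h
    simp only [mem_product, mem_powerset, mem_filter, subset_compl_iff_disjoint_right] at h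
    obtain ⟨hA, hB, -⟩ := h
    simp only [hsplit hA hB]

theorem eq_add_of_add_eq_zmod_two {ι : Type*} {v v' f : ι → ZMod 2} (h : v + v' = f) :
    v' = v + f := by
  subst h
  funext i
  simp only [Pi.add_apply, ← add_assoc, CharTwo.add_self_eq_zero, zero_add]

section ZModTwo

variable {ι : Type*} [Fintype ι]

theorem hammingNorm_add_hammingNorm_add (v f : ι → ZMod 2) :
    hammingNorm v + hammingNorm (v + f) = hammingNorm f + 2 * #{i | v i ≠ 0 ∧ f i = 0} := by
  simp only [hammingNorm, card_filter, ← sum_add_distrib, mul_sum, Pi.add_apply]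
  have key : ∀ a b : ZMod 2, ((if a ≠ 0 then 1 else 0) + if a + b ≠ 0 then 1 else 0) =
      (if b ≠ 0 then 1 else 0) + 2 * if a ≠ 0 ∧ b = 0 then 1 else 0 := by decide
  exact sum_congr rfl fun i _ => key (v i) (f i)

variable [DecidableEq ι]

theorem card_filter_card_support_sdiff_le (f : ι → ZMod 2) (k : ℕ) :
    #{v : ι → ZMod 2 | #{i | v i ≠ 0 ∧ f i = 0} ≤ k} ≤
      2 ^ hammingNorm f * binomLe (Fintype.card ι - hammingNorm f) k := by
  have hcompl : Fintype.card ι - hammingNorm f = #({i | f i ≠ 0} : Finset ι)ᶜ :=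
    (card_compl _).symm
  rw [hcompl, hammingNorm, ← card_filter_card_sdiff_le]
  refine card_le_card_of_injOn (fun v => ({i | v i ≠ 0} : Finset ι)) ?_ ?_
  · intro v hv
    simp only [coe_filter, mem_univ, true_and, Set.mem_ofPred_eq] at hv ⊢
    rwa [← filter_and_not, filter_congr fun i _ => by rw [not_not]]
  · intro v _ v' _ hvv'
    funext i
    have hi := congrArg (i ∈ ·) hvv'
    simp only [mem_filter, mem_univ, true_and, eq_iff_iff] at hi
    have key : ∀ a b : ZMod 2, (a ≠ 0 ↔ b ≠ 0) → a = b := by decide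
    exact key _ _ hi

end ZModTwo

theorem le_toNat_floor_sub_half {b c w : ℕ} (h : b + 2 * c ≤ 2 * w) :
    c ≤ ⌊(w : ℝ) - b / 2⌋.toNat := by
  have hreal : (b : ℝ) + 2 * c ≤ 2 * w := by exact_mod_cast h
  rw [Int.le_toNat (Int.floor_nonneg.mpr (by linarith)), Int.le_floor]
  push_cast
  linarith

theorem bad_pairs_count_general (m : ℕ) (f : BF m) (w : ℕ) :
    (2 * w < hammingNorm f →
      {p : BF m × BF m | p.1 + p.2 = f ∧
        hammingNorm p.2 ≤ hammingNorm p.1 ∧ hammingNorm p.1 = w} = ∅) ∧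
    (hammingNorm f ≤ 2 * w →
      Set.ncard {p : BF m × BF m | p.1 + p.2 = f ∧
          hammingNorm p.2 ≤ hammingNorm p.1 ∧ hammingNorm p.1 = w} ≤
        2 ^ hammingNorm f *
          binomLe (2 ^ m - hammingNorm f)
            (⌊(w : ℝ) - (hammingNorm f : ℝ) / 2⌋.toNat)) := by
  set pairs := {p : BF m × BF m | p.1 + p.2 = f ∧
    hammingNorm p.2 ≤ hammingNorm p.1 ∧ hammingNorm p.1 = w}
  have hpairs : ∀ p ∈ pairs,
      p.2 = p.1 + f ∧ hammingNorm f + 2 * #{i | p.1 i ≠ 0 ∧ f i = 0} ≤ 2 * w := by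
    rintro ⟨v, v'⟩ ⟨hsum, hle, hw⟩
    obtain rfl : v' = v + f := eq_add_of_add_eq_zmod_two hsum
    have := hammingNorm_add_hammingNorm_add v f
    exact ⟨rfl, by dsimp only at hle hw ⊢; omega⟩
  refine ⟨fun hlt => Set.eq_empty_of_forall_notMem fun p hp => ?_, fun _ => ?_⟩
  · have := (hpairs p hp).2
    omega
  have hcard : Fintype.card (Cube m) = 2 ^ m := by simp
  calc pairs.ncard
      ≤ #{v : BF m | #{i | v i ≠ 0 ∧ f i = 0} ≤ ⌊(w : ℝ) - hammingNorm f / 2⌋.toNat} := by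
        rw [← Set.ncard_coe_finset]
        refine Set.ncard_le_ncard_of_injOn Prod.fst (fun p hp => ?_) (fun p hp q hq hpq => ?_)
          (finite_toSet _)
        · simpa using le_toNat_floor_sub_half (hpairs p hp).2
        · exact Prod.ext hpq (by rw [(hpairs p hp).1, (hpairs q hq).1, hpq])
    _ ≤ _ := hcard ▸ card_filter_card_support_sdiff_le f _

/-- counting pairs of error patterns (v, v') with v + v' equal to
the evaluation vector of a nonzero codeword f with b nonzero evaluations and
|v'| ≤ |v| = w: the set is empty if 2w < b, and otherwise has size at most
2^b · binom(2^m - b, ≤ ⌊w - b/2⌋) (inequality `eq: bad pairs bsc`). -/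
theorem bad_pairs_count (m r : ℕ) (hrm : r ≤ m) (f : BF m) (hf : f ∈ RM m r)
    (hf0 : f ≠ 0) (w : ℕ) (hw : w ≤ 2 ^ m) :
    (2 * w < hammingNorm f →
      {p : BF m × BF m | p.1 + p.2 = f ∧
        hammingNorm p.2 ≤ hammingNorm p.1 ∧ hammingNorm p.1 = w} = ∅) ∧
    (hammingNorm f ≤ 2 * w →
      Set.ncard {p : BF m × BF m | p.1 + p.2 = f ∧
          hammingNorm p.2 ≤ hammingNorm p.1 ∧ hammingNorm p.1 = w} ≤
        2 ^ hammingNorm f *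
          binomLe (2 ^ m - hammingNorm f)
            (⌊(w : ℝ) - (hammingNorm f : ℝ) / 2⌋.toNat)) :=
  bad_pairs_count_general m f w
end
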